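/- arXiv:1303.4532 — 10 statements merged into one kernel-verified Lean document; each statement's English description precedes it below -/
import Mathlib

section
/- (Lemma 1) Let ν be a probability distribution on S such that for each i with ν(A_i) > 0 and each s ∈ A_i, ν(s)/ν(A_i) = α_i(s). Then for every i with ν(A_i) > 0 and every j, the one-step conditional probability of moving from A_i into A_j equals P̃(A_i, A_j); that is, (∑_{s'∈A_i} ∑_{s∈A_j} ν(s') P(s', s)) / ν(A_i) = P̃(A_i, A_j). -/
/-!
On a block `A i` of positive mass, `ν` is `ν(A i) • α i`, so by (Cond1) the mass flowing from `A i`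
into a state `s ∈ A j` is `ν(A i) * P̃(A i, A j) * α j s`; summing over `s ∈ A j`, where `α j` is a
probability, leaves `ν(A i) * P̃(A i, A j)`.
-/

open Finset

section Lumping

variable {S : Type*}

lemma sum_mul_eq_mul_sum_of_eq_mul {I : Finset S} {ν α : S → ℝ} {w : ℝ}
    (hν : ∀ s ∈ I, ν s = w * α s) (f : S → ℝ) :
    ∑ s ∈ I, ν s * f s = w * ∑ s ∈ I, α s * f s := by
  rw [mul_sum]
  exact sum_congr rfl fun s hs => by rw [hν s hs, mul_assoc]

lemma sum_sum_mul_eq_of_lumpable {I J : Finset S} {ν α β : S → ℝ} (P : Matrix S S ℝ) {w c : ℝ}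
    (hν : ∀ s ∈ I, ν s = w * α s)
    (hP : ∀ s ∈ J, ∑ s' ∈ I, α s' * P s' s = c * β s)
    (hβ : ∑ s ∈ J, β s = 1) :
    ∑ s' ∈ I, ∑ s ∈ J, ν s' * P s' s = w * c :=
  calc ∑ s' ∈ I, ∑ s ∈ J, ν s' * P s' s
      = ∑ s ∈ J, w * ∑ s' ∈ I, α s' * P s' s := by
        rw [sum_comm]
        exact sum_congr rfl fun s _ => sum_mul_eq_mul_sum_of_eq_mul hν _
    _ = ∑ s ∈ J, w * c * β s := sum_congr rfl fun s hs => by rw [hP s hs, mul_assoc]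
    _ = w * c := by rw [← mul_sum, hβ, mul_one]

end Lumping

theorem stmt_1_general {S : Type*}
    {m : ℕ} (A : Fin m → Finset S)
    (P : Matrix S S ℝ)
    (α : Fin m → S → ℝ)
    (hαpos : ∀ i, ∀ s ∈ A i, 0 < α i s)
    (hα1 : ∀ i, ∑ s ∈ A i, α i s = 1)
    (Pt : Matrix (Fin m) (Fin m) ℝ)
    (hPt : ∀ i j : Fin m, ∀ s ∈ A j,
      Pt i j = (∑ s' ∈ A i, α i s' * P s' s) / α j s)
    (ν : S → ℝ)
    (hνα : ∀ i : Fin m, 0 < ∑ s ∈ A i, ν s →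
      ∀ s ∈ A i, ν s / (∑ s' ∈ A i, ν s') = α i s) :
    ∀ i : Fin m, 0 < ∑ s ∈ A i, ν s → ∀ j : Fin m,
      (∑ s' ∈ A i, ∑ s ∈ A j, ν s' * P s' s) / (∑ s ∈ A i, ν s) = Pt i j := by
  intro i hi j
  have hν : ∀ s ∈ A i, ν s = (∑ s' ∈ A i, ν s') * α i s := fun s hs => by
    rw [← hνα i hi s hs, mul_div_cancel₀ _ hi.ne']
  have hP : ∀ s ∈ A j, ∑ s' ∈ A i, α i s' * P s' s = Pt i j * α j s := fun s hs => by
    rw [hPt i j s hs, div_mul_cancel₀ _ (hαpos j s hs).ne']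
  rw [sum_sum_mul_eq_of_lumpable P hν hP (hα1 j), mul_div_cancel_left₀ _ hi.ne']

theorem stmt_1 {S : Type*} [Fintype S] [DecidableEq S] [Nonempty S]
    {m : ℕ} (A : Fin m → Finset S)
    (hpart : ∀ s : S, ∃! i : Fin m, s ∈ A i)
    (hne : ∀ i, (A i).Nonempty)
    (P : Matrix S S ℝ)
    (hP0 : ∀ s s' : S, 0 ≤ P s s')
    (hP1 : ∀ s : S, ∑ s' : S, P s s' = 1)
    (α : Fin m → S → ℝ)
    (hα0 : ∀ i, ∀ s : S, s ∉ A i → α i s = 0)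
    (hαpos : ∀ i, ∀ s ∈ A i, 0 < α i s)
    (hα1 : ∀ i, ∑ s ∈ A i, α i s = 1)
    (Pt : Matrix (Fin m) (Fin m) ℝ)
    (hPt : ∀ i j : Fin m, ∀ s ∈ A j,
      Pt i j = (∑ s' ∈ A i, α i s' * P s' s) / α j s)
    (ν : S → ℝ) (hν0 : ∀ s : S, 0 ≤ ν s) (hν1 : ∑ s : S, ν s = 1)
    (hνα : ∀ i : Fin m, 0 < ∑ s ∈ A i, ν s →
      ∀ s ∈ A i, ν s / (∑ s' ∈ A i, ν s') = α i s) :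
    ∀ i : Fin m, 0 < ∑ s ∈ A i, ν s → ∀ j : Fin m,
      (∑ s' ∈ A i, ∑ s ∈ A j, ν s' * P s' s) / (∑ s ∈ A i, ν s) = Pt i j :=
  stmt_1_general A P α hαpos hα1 Pt hPt ν hνα
end

section
/- (Lemma 2) Let π be a probability distribution on S that respects {α_i}, and assume πP^n(A_i) > 0 for all n and i. Then for every n ≥ 0, every i, and every s ∈ A_i, the conditional distribution of the chain at time n given it lies in A_i equals α_i: (πP^n)(s) / (πP^n)(A_i) = α_i(s). -/
/-!
If `q` respects `α`, the mass that block `A i` sends to a state `s ∈ A j` in one step is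
`q(A i) * ∑ s' ∈ A i, α i s' * P s' s = q(A i) * P̃ i j * α j s`, so by (Cond1) `qP` is again
proportional to `α j` on `A j`: respecting `α` is preserved by `P`. By induction every `πP^n`
respects `α`, and dividing by the positive block mass gives the conditional distribution.
-/

open Finset Matrix

theorem Finset.sum_eq_sum_sum_of_existsUnique_mem {S ι M : Type*} [Fintype S] [Fintype ι]
    [AddCommMonoid M] {A : ι → Finset S} (hA : ∀ s, ∃! i, s ∈ A i) (f : S → M) :
    ∑ s, f s = ∑ i, ∑ s ∈ A i, f s := by
  classical
  choose block hblock hunique using hA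
  rw [← Finset.sum_fiberwise univ block f]
  refine Finset.sum_congr rfl fun i _ => Finset.sum_congr ?_ fun _ _ => rfl
  ext s
  simp only [mem_filter, mem_univ, true_and]
  exact ⟨fun h => h ▸ hblock s, fun h => (hunique s i h).symm⟩

section Lumping

variable {S ι R : Type*} [CommSemiring R]

def RespectsWeights (A : ι → Finset S) (α : ι → S → R) (q : S → R) : Prop :=
  ∀ i, ∀ s ∈ A i, q s = α i s * ∑ s' ∈ A i, q s'

variable [Fintype S] [Fintype ι] {A : ι → Finset S} {α : ι → S → R} {P : Matrix S S R}
  {Pt : Matrix ι ι R} {q : S → R}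

theorem vecMul_apply_of_respectsWeights (hA : ∀ s, ∃! i, s ∈ A i)
    (hPt : ∀ i j, ∀ s ∈ A j, Pt i j * α j s = ∑ s' ∈ A i, α i s' * P s' s)
    (hq : RespectsWeights A α q) {j : ι} {s : S} (hs : s ∈ A j) :
    (q ᵥ* P) s = α j s * ∑ i, (∑ s' ∈ A i, q s') * Pt i j := by
  have hblock : ∀ i, ∑ s' ∈ A i, q s' * P s' s = (∑ s' ∈ A i, q s') * Pt i j * α j s := by
    intro i
    calc ∑ s' ∈ A i, q s' * P s' s
        = (∑ s' ∈ A i, q s') * ∑ s' ∈ A i, α i s' * P s' s := by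
          rw [Finset.mul_sum]
          refine Finset.sum_congr rfl fun s' hs' => ?_
          rw [hq i s' hs']
          ring
      _ = (∑ s' ∈ A i, q s') * Pt i j * α j s := by rw [← hPt i j s hs, mul_assoc]
  calc (q ᵥ* P) s = ∑ i, ∑ s' ∈ A i, q s' * P s' s :=
        Finset.sum_eq_sum_sum_of_existsUnique_mem hA _
    _ = α j s * ∑ i, (∑ s' ∈ A i, q s') * Pt i j := by
      rw [Finset.sum_congr rfl fun i _ => hblock i, ← Finset.sum_mul, mul_comm]

theorem RespectsWeights.vecMul (hA : ∀ s, ∃! i, s ∈ A i) (hα : ∀ i, ∑ s ∈ A i, α i s = 1)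
    (hPt : ∀ i j, ∀ s ∈ A j, Pt i j * α j s = ∑ s' ∈ A i, α i s' * P s' s)
    (hq : RespectsWeights A α q) : RespectsWeights A α (q ᵥ* P) := by
  intro j s hs
  have hmass : ∑ s' ∈ A j, (q ᵥ* P) s' = ∑ i, (∑ s' ∈ A i, q s') * Pt i j := by
    rw [Finset.sum_congr rfl fun s' hs' => vecMul_apply_of_respectsWeights hA hPt hq hs',
      ← Finset.sum_mul, hα j, one_mul]
  rw [hmass, vecMul_apply_of_respectsWeights hA hPt hq hs]

theorem RespectsWeights.vecMul_pow [DecidableEq S] (hA : ∀ s, ∃! i, s ∈ A i)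
    (hα : ∀ i, ∑ s ∈ A i, α i s = 1)
    (hPt : ∀ i j, ∀ s ∈ A j, Pt i j * α j s = ∑ s' ∈ A i, α i s' * P s' s)
    (hq : RespectsWeights A α q) (n : ℕ) : RespectsWeights A α (q ᵥ* P ^ n) := by
  induction n with
  | zero => simpa only [pow_zero, vecMul_one] using hq
  | succ n ih => simpa only [pow_succ, ← vecMul_vecMul] using ih.vecMul hA hα hPt

end Lumping

theorem stmt_2_general {S : Type*} [Fintype S] [DecidableEq S]
    {m : ℕ} (A : Fin m → Finset S)
    (hpart : ∀ s : S, ∃! i : Fin m, s ∈ A i)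
    (P : Matrix S S ℝ)
    (α : Fin m → S → ℝ)
    (hαpos : ∀ i, ∀ s ∈ A i, 0 < α i s)
    (hα1 : ∀ i, ∑ s ∈ A i, α i s = 1)
    (Pt : Matrix (Fin m) (Fin m) ℝ)
    (hPt : ∀ i j : Fin m, ∀ s ∈ A j,
      Pt i j = (∑ s' ∈ A i, α i s' * P s' s) / α j s)
    (π : S → ℝ)
    (hresp : ∀ i : Fin m, ∀ s ∈ A i, π s = α i s * ∑ s' ∈ A i, π s')
    (hpos : ∀ (n : ℕ) (i : Fin m), 0 < ∑ s ∈ A i, Matrix.vecMul π (P ^ n) s) :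
    ∀ (n : ℕ) (i : Fin m), ∀ s ∈ A i,
      Matrix.vecMul π (P ^ n) s / (∑ s' ∈ A i, Matrix.vecMul π (P ^ n) s') = α i s := by
  have hlump : ∀ i j, ∀ s ∈ A j, Pt i j * α j s = ∑ s' ∈ A i, α i s' * P s' s :=
    fun i j s hs => by rw [hPt i j s hs, div_mul_cancel₀ _ (hαpos j s hs).ne']
  intro n i s hs
  rw [RespectsWeights.vecMul_pow hpart hα1 hlump hresp n i s hs, mul_div_assoc,
    div_self (hpos n i).ne', mul_one]

theorem stmt_2 {S : Type*} [Fintype S] [DecidableEq S] [Nonempty S]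
    {m : ℕ} (A : Fin m → Finset S)
    (hpart : ∀ s : S, ∃! i : Fin m, s ∈ A i)
    (hne : ∀ i, (A i).Nonempty)
    (P : Matrix S S ℝ)
    (hP0 : ∀ s s' : S, 0 ≤ P s s')
    (hP1 : ∀ s : S, ∑ s' : S, P s s' = 1)
    (α : Fin m → S → ℝ)
    (hα0 : ∀ i, ∀ s : S, s ∉ A i → α i s = 0)
    (hαpos : ∀ i, ∀ s ∈ A i, 0 < α i s)
    (hα1 : ∀ i, ∑ s ∈ A i, α i s = 1)
    (Pt : Matrix (Fin m) (Fin m) ℝ)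
    (hPt : ∀ i j : Fin m, ∀ s ∈ A j,
      Pt i j = (∑ s' ∈ A i, α i s' * P s' s) / α j s)
    (π : S → ℝ) (hπ0 : ∀ s : S, 0 ≤ π s) (hπ1 : ∑ s : S, π s = 1)
    (hresp : ∀ i : Fin m, ∀ s ∈ A i, π s = α i s * ∑ s' ∈ A i, π s')
    (hpos : ∀ (n : ℕ) (i : Fin m), 0 < ∑ s ∈ A i, Matrix.vecMul π (P ^ n) s) :
    ∀ (n : ℕ) (i : Fin m), ∀ s ∈ A i,
      Matrix.vecMul π (P ^ n) s / (∑ s' ∈ A i, Matrix.vecMul π (P ^ n) s') = α i s :=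
  stmt_2_general A hpart P α hαpos hα1 Pt hPt π hresp hpos
end

section
/- Assume condition (Cond1) holds. Then for every n ≥ 1, every i, j, and every s ∈ A_j, the n-step transition probabilities satisfy P̃^n(A_i, A_j) = (∑_{s'∈A_i} α_i(s') P^n(s', s)) / α_j(s). -/
/-!
Viewing the measures `α i` as the rows of an `m × S` matrix `α`, condition (Cond1) says exactly
that `α * P = P̃ * α`. Such an intertwining relation iterates to `α * P ^ n = P̃ ^ n * α`, and
reading this identity back entrywise gives the formula for `P̃ ^ n`.
-/

open Finset

theorem Matrix.mul_pow_eq_pow_mul_of_mul_eq {m n R : Type*} [Fintype m] [Fintype n]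
    [DecidableEq m] [DecidableEq n] [Semiring R] {V : Matrix m n R} {P : Matrix n n R}
    {Q : Matrix m m R} (h : V * P = Q * V) (k : ℕ) : V * P ^ k = Q ^ k * V := by
  induction k with
  | zero => simp
  | succ k ih => rw [pow_succ, ← Matrix.mul_assoc, ih, Matrix.mul_assoc, h, pow_succ,
      Matrix.mul_assoc]

section Lumping

variable {ι κ S R : Type*} {A : ι → Finset S} {α : Matrix ι S R}

theorem mul_apply_eq_sum_of_support [Fintype S] [NonUnitalNonAssocSemiring R]
    (hα0 : ∀ i, ∀ s ∉ A i, α i s = 0) (M : Matrix S κ R) (i : ι) (c : κ) :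
    (α * M) i c = ∑ s ∈ A i, α i s * M s c := by
  rw [Matrix.mul_apply]
  exact (sum_subset (subset_univ _) fun s _ hs => by rw [hα0 i s hs, zero_mul]).symm

theorem mul_apply_eq_of_mem [Fintype ι] [NonUnitalNonAssocSemiring R] (hpart : ∀ s : S, ∃! i, s ∈ A i)
    (hα0 : ∀ i, ∀ s ∉ A i, α i s = 0) (N : Matrix κ ι R) (c : κ) {j : ι} {s : S}
    (hs : s ∈ A j) : (N * α) c s = N c j * α j s := by
  rw [Matrix.mul_apply]
  refine Fintype.sum_eq_single j fun k hk => ?_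
  rw [hα0 k s fun hk' => hk ((hpart s).unique hk' hs), mul_zero]

theorem mul_eq_mul_iff_forall_eq_div [Fintype ι] [Fintype S] [Field R] (hpart : ∀ s : S, ∃! i, s ∈ A i)
    (hα0 : ∀ i, ∀ s ∉ A i, α i s = 0) (hαne : ∀ i, ∀ s ∈ A i, α i s ≠ 0)
    (M : Matrix S S R) (N : Matrix ι ι R) :
    α * M = N * α ↔ ∀ i j, ∀ s ∈ A j, N i j = (∑ s' ∈ A i, α i s' * M s' s) / α j s := by
  constructor
  · intro h i j s hs
    rw [eq_div_iff (hαne j s hs), ← mul_apply_eq_of_mem hpart hα0 N i hs, ← h,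
      mul_apply_eq_sum_of_support hα0]
  · intro h
    ext i s
    obtain ⟨j, hs, -⟩ := hpart s
    rw [mul_apply_eq_sum_of_support hα0, mul_apply_eq_of_mem hpart hα0 N i hs, h i j s hs,
      div_mul_cancel₀ _ (hαne j s hs)]

end Lumping

theorem stmt_5_general {S : Type*} [Fintype S] [DecidableEq S]
    {m : ℕ} (A : Fin m → Finset S)
    (hpart : ∀ s : S, ∃! i : Fin m, s ∈ A i)
    (P : Matrix S S ℝ)
    (α : Fin m → S → ℝ)
    (hα0 : ∀ i, ∀ s : S, s ∉ A i → α i s = 0)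
    (hαpos : ∀ i, ∀ s ∈ A i, 0 < α i s)
    (Pt : Matrix (Fin m) (Fin m) ℝ)
    (hPt : ∀ i j : Fin m, ∀ s ∈ A j,
      Pt i j = (∑ s' ∈ A i, α i s' * P s' s) / α j s) :
    ∀ n : ℕ, 1 ≤ n → ∀ i j : Fin m, ∀ s ∈ A j,
      (Pt ^ n) i j = (∑ s' ∈ A i, α i s' * (P ^ n) s' s) / α j s := by
  intro n _
  have hαne : ∀ i, ∀ s ∈ A i, α i s ≠ 0 := fun i s hs => (hαpos i s hs).ne'
  have hintertwine := (mul_eq_mul_iff_forall_eq_div hpart hα0 hαne P Pt).mpr hPt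
  exact (mul_eq_mul_iff_forall_eq_div hpart hα0 hαne (P ^ n) (Pt ^ n)).mp
    (Matrix.mul_pow_eq_pow_mul_of_mul_eq hintertwine n)

theorem stmt_5 {S : Type*} [Fintype S] [DecidableEq S] [Nonempty S]
    {m : ℕ} (A : Fin m → Finset S)
    (hpart : ∀ s : S, ∃! i : Fin m, s ∈ A i)
    (hne : ∀ i, (A i).Nonempty)
    (P : Matrix S S ℝ)
    (hP0 : ∀ s s' : S, 0 ≤ P s s')
    (hP1 : ∀ s : S, ∑ s' : S, P s s' = 1)
    (α : Fin m → S → ℝ)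
    (hα0 : ∀ i, ∀ s : S, s ∉ A i → α i s = 0)
    (hαpos : ∀ i, ∀ s ∈ A i, 0 < α i s)
    (hα1 : ∀ i, ∑ s ∈ A i, α i s = 1)
    (Pt : Matrix (Fin m) (Fin m) ℝ)
    (hPt : ∀ i j : Fin m, ∀ s ∈ A j,
      Pt i j = (∑ s' ∈ A i, α i s' * P s' s) / α j s) :
    ∀ n : ℕ, 1 ≤ n → ∀ i j : Fin m, ∀ s ∈ A j,
      (Pt ^ n) i j = (∑ s' ∈ A i, α i s' * (P ^ n) s' s) / α j s :=
  stmt_5_general A hpart P α hα0 hαpos Pt hPt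
end

section
/- Assume condition (Cond1) holds. If a state s ∈ A_i is recurrent for P in the sense that the series ∑_{n≥1} P^n(s, s) diverges, then A_i is recurrent for P̃, i.e. the series ∑_{n≥1} P̃^n(A_i, A_i) diverges. -/
open Finset Matrix Filter

/-!
Let `Λ` be the `m × S` matrix whose rows are the weights `α i`. Condition (Cond1) says exactly
that `Λ * P = P̃ * Λ`, hence `Λ * P ^ n = P̃ ^ n * Λ` for every `n`. Reading off the `(i, s)` entry
for `s ∈ A i`, nonnegativity gives `α i s * P ^ n s s ≤ P̃ ^ n i i * α i s`, so the return
probabilities of `P̃` dominate those of `P`, and divergence transfers by comparison.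
-/

namespace Matrix

variable {ι S R : Type*} [Fintype ι] [Fintype S]

theorem mul_pow_eq_pow_mul_of_mul_eq_mul [DecidableEq ι] [DecidableEq S] [Semiring R]
    {L : Matrix ι S R} {Q : Matrix S S R} {T : Matrix ι ι R} (h : L * Q = T * L) (n : ℕ) : L * Q ^ n = T ^ n * L := by
  induction n with
  | zero => simp
  | succ n ih =>
    rw [pow_succ, ← Matrix.mul_assoc, ih, Matrix.mul_assoc, h, ← Matrix.mul_assoc, ← pow_succ]

theorem apply_self_le_of_mul_eq_mul [CommSemiring R] [LinearOrder R] [IsStrictOrderedRing R]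
    {L : Matrix ι S R} {Q : Matrix S S R} {T : Matrix ι ι R} (h : L * Q = T * L)
    (hL : ∀ k t, 0 ≤ L k t) (hQ : ∀ t t', 0 ≤ Q t t') {i : ι} {s : S}
    (hpos : 0 < L i s) (hcol : ∀ k ≠ i, L k s = 0) : Q s s ≤ T i i := by
  have hleft : L i s * Q s s ≤ (L * Q) i s :=
    single_le_sum (f := fun t => L i t * Q t s) (fun t _ => mul_nonneg (hL i t) (hQ t s))
      (mem_univ s)
  have hright : (T * L) i s = L i s * T i i := by
    rw [mul_apply, sum_eq_single i (fun k _ hk => by rw [hcol k hk, mul_zero]) (by simp),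
      mul_comm]
  rw [h, hright] at hleft
  exact le_of_mul_le_mul_left hleft hpos

end Matrix

theorem of_mul_eq_lumped_mul_of {ι S : Type*} [Fintype ι] [Fintype S] (A : ι → Finset S)
    (hpart : ∀ s : S, ∃! i : ι, s ∈ A i) (P : Matrix S S ℝ) (α : ι → S → ℝ)
    (hα0 : ∀ i, ∀ s : S, s ∉ A i → α i s = 0) (hαpos : ∀ i, ∀ s ∈ A i, 0 < α i s)
    (Pt : Matrix ι ι ℝ)
    (hPt : ∀ i j : ι, ∀ s ∈ A j, Pt i j = (∑ s' ∈ A i, α i s' * P s' s) / α j s) :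
    of α * P = Pt * of α := by
  ext i t
  obtain ⟨j, htj, huniq⟩ := hpart t
  have hweights : ∑ s', α i s' * P s' t = ∑ s' ∈ A i, α i s' * P s' t :=
    (sum_subset (subset_univ _) fun s' _ hs' => by rw [hα0 i s' hs', zero_mul]).symm
  have hlumped : ∑ k, Pt i k * α k t = Pt i j * α j t :=
    sum_eq_single j (fun k _ hk => by rw [hα0 k t fun htk => hk (huniq k htk), mul_zero])
      (by simp)
  simp only [mul_apply, of_apply]
  rw [hweights, hlumped, hPt i j t htj, div_mul_cancel₀ _ (hαpos j t htj).ne']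

theorem stmt_8_general {S : Type*} [Fintype S] [DecidableEq S]
    {m : ℕ} (A : Fin m → Finset S)
    (hpart : ∀ s : S, ∃! i : Fin m, s ∈ A i)
    (P : Matrix S S ℝ)
    (hP0 : ∀ s s' : S, 0 ≤ P s s')
    (α : Fin m → S → ℝ)
    (hα0 : ∀ i, ∀ s : S, s ∉ A i → α i s = 0)
    (hαpos : ∀ i, ∀ s ∈ A i, 0 < α i s)
    (Pt : Matrix (Fin m) (Fin m) ℝ)
    (hPt : ∀ i j : Fin m, ∀ s ∈ A j,
      Pt i j = (∑ s' ∈ A i, α i s' * P s' s) / α j s)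
    (i : Fin m) (s : S) (hs : s ∈ A i)
    (hrec : ¬ Summable (fun n : ℕ => (P ^ (n + 1)) s s)) :
    ¬ Summable (fun n : ℕ => (Pt ^ (n + 1)) i i) := by
  have hα_nonneg : ∀ k t, 0 ≤ of α k t := fun k t => by
    by_cases htk : t ∈ A k
    · exact (hαpos k t htk).le
    · exact (hα0 k t htk).ge
  have hle : ∀ n, (P ^ n) s s ≤ (Pt ^ n) i i := fun n =>
    apply_self_le_of_mul_eq_mul
      (mul_pow_eq_pow_mul_of_mul_eq_mul (of_mul_eq_lumped_mul_of A hpart P α hα0 hαpos Pt hPt) n)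
      hα_nonneg (pow_apply_nonneg hP0 n) (hαpos i s hs)
      fun k hk => hα0 k s fun hks => hk ((hpart s).unique hks hs)
  exact fun hsum =>
    hrec (hsum.of_nonneg_of_le (fun n => pow_apply_nonneg hP0 _ s s) fun n => hle (n + 1))

theorem stmt_8 {S : Type*} [Fintype S] [DecidableEq S] [Nonempty S]
    {m : ℕ} (A : Fin m → Finset S)
    (hpart : ∀ s : S, ∃! i : Fin m, s ∈ A i)
    (hne : ∀ i, (A i).Nonempty)
    (P : Matrix S S ℝ)
    (hP0 : ∀ s s' : S, 0 ≤ P s s')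
    (hP1 : ∀ s : S, ∑ s' : S, P s s' = 1)
    (α : Fin m → S → ℝ)
    (hα0 : ∀ i, ∀ s : S, s ∉ A i → α i s = 0)
    (hαpos : ∀ i, ∀ s ∈ A i, 0 < α i s)
    (hα1 : ∀ i, ∑ s ∈ A i, α i s = 1)
    (Pt : Matrix (Fin m) (Fin m) ℝ)
    (hPt : ∀ i j : Fin m, ∀ s ∈ A j,
      Pt i j = (∑ s' ∈ A i, α i s' * P s' s) / α j s)
    (i : Fin m) (s : S) (hs : s ∈ A i)
    (hrec : ¬ Summable (fun n : ℕ => (P ^ (n + 1)) s s)) :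
    ¬ Summable (fun n : ℕ => (Pt ^ (n + 1)) i i) :=
  stmt_8_general A hpart P hP0 α hα0 hαpos Pt hPt i s hs hrec
end

section
/- Assume condition (Cond1) holds. If a state s ∈ A_i has period 1 for P, i.e. gcd{n ≥ 1 : P^n(s, s) > 0} = 1, then A_i has period 1 for P̃, i.e. gcd{n ≥ 1 : P̃^n(A_i, A_i) > 0} = 1. -/
/-!
Viewing the weights `α` as an `m × S` matrix, (Cond1) together with the support conditions on
`α` says exactly `α * P = P̃ * α`, hence `α * P ^ n = P̃ ^ n * α` for all `n`. Evaluating at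
`(i, s)` with `s ∈ A i` gives `P̃ ^ n (i, i) * α i s = ∑ s', α i s' * P ^ n (s', s)`, which is
positive as soon as `P ^ n (s, s)` is. So every return time of `s` is a return time of `A i`,
and a common divisor of the latter divides the former.
-/

open Matrix

theorem Matrix.mul_pow_eq_pow_mul {ι S R : Type*} [Fintype ι] [DecidableEq ι] [Fintype S]
    [DecidableEq S] [Semiring R] {V : Matrix ι S R} {P : Matrix S S R} {Q : Matrix ι ι R}
    (h : V * P = Q * V) (n : ℕ) : V * P ^ n = Q ^ n * V := by
  induction n with
  | zero => simp
  | succ n ih =>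
    rw [pow_succ, ← Matrix.mul_assoc, ih, Matrix.mul_assoc, h, ← Matrix.mul_assoc, ← pow_succ]

theorem Matrix.mul_apply_eq_of_col_eq_zero {ι κ S R : Type*} [Fintype κ] [DecidableEq κ]
    [NonUnitalNonAssocSemiring R] (B : Matrix ι κ R) {V : Matrix κ S R} {j : κ} {t : S}
    (hV : ∀ l ≠ j, V l t = 0) (k : ι) : (B * V) k t = B k j * V j t := by
  rw [mul_apply, Finset.sum_eq_single j (fun l _ hl => by rw [hV l hl, mul_zero])
    (fun hj => absurd (Finset.mem_univ j) hj)]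

section Lumping

variable {S : Type*} {m : ℕ} {A : Fin m → Finset S} {α : Fin m → S → ℝ}

theorem weight_eq_zero_of_ne (hpart : ∀ s : S, ∃! i : Fin m, s ∈ A i)
    (hα0 : ∀ i, ∀ s : S, s ∉ A i → α i s = 0) {j : Fin m} {t : S} (ht : t ∈ A j) :
    ∀ l ≠ j, α l t = 0 :=
  fun l hl => hα0 l t fun htl => hl ((hpart t).unique htl ht)

theorem weight_nonneg (hα0 : ∀ i, ∀ s : S, s ∉ A i → α i s = 0)
    (hαpos : ∀ i, ∀ s ∈ A i, 0 < α i s) (i : Fin m) (s : S) : 0 ≤ α i s := by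
  by_cases hs : s ∈ A i
  · exact (hαpos i s hs).le
  · exact (hα0 i s hs).ge

variable [Fintype S] {P : Matrix S S ℝ} {Pt : Matrix (Fin m) (Fin m) ℝ}

theorem weights_mul_eq_lumped_mul (hpart : ∀ s : S, ∃! i : Fin m, s ∈ A i)
    (hα0 : ∀ i, ∀ s : S, s ∉ A i → α i s = 0) (hαpos : ∀ i, ∀ s ∈ A i, 0 < α i s)
    (hPt : ∀ i j : Fin m, ∀ s ∈ A j, Pt i j = (∑ s' ∈ A i, α i s' * P s' s) / α j s) :
    (of α : Matrix (Fin m) S ℝ) * P = Pt * of α := by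
  ext k t
  obtain ⟨j, ht, -⟩ := hpart t
  rw [mul_apply_eq_of_col_eq_zero (V := of α) Pt (weight_eq_zero_of_ne hpart hα0 ht),
    hPt k j t ht, of_apply, div_mul_cancel₀ _ (hαpos j t ht).ne', mul_apply]
  exact (Finset.sum_subset (Finset.subset_univ _)
    fun s' _ hs' => by simp only [of_apply, hα0 k s' hs', zero_mul]).symm

theorem lumped_pow_pos_of_pow_pos [DecidableEq S] (hpart : ∀ s : S, ∃! i : Fin m, s ∈ A i)
    (hP0 : ∀ s s' : S, 0 ≤ P s s') (hα0 : ∀ i, ∀ s : S, s ∉ A i → α i s = 0)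
    (hαpos : ∀ i, ∀ s ∈ A i, 0 < α i s)
    (hPt : ∀ i j : Fin m, ∀ s ∈ A j, Pt i j = (∑ s' ∈ A i, α i s' * P s' s) / α j s)
    {i : Fin m} {s : S} (hs : s ∈ A i) {n : ℕ} (hpos : 0 < (P ^ n) s s) :
    0 < (Pt ^ n) i i := by
  have hα := hαpos i s hs
  have hintertwine := mul_pow_eq_pow_mul (weights_mul_eq_lumped_mul hpart hα0 hαpos hPt) n
  have hentry : (Pt ^ n) i i * α i s = ∑ s', α i s' * (P ^ n) s' s :=
    calc (Pt ^ n) i i * α i s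
        = (Pt ^ n * of α) i s :=
          (mul_apply_eq_of_col_eq_zero (V := of α) _ (weight_eq_zero_of_ne hpart hα0 hs) i).symm
      _ = (of α * P ^ n) i s := by rw [hintertwine]
      _ = ∑ s', α i s' * (P ^ n) s' s := mul_apply
  have hlower : α i s * (P ^ n) s s ≤ ∑ s', α i s' * (P ^ n) s' s :=
    Finset.single_le_sum (fun s' _ => mul_nonneg (weight_nonneg hα0 hαpos i s')
      (pow_apply_nonneg hP0 n s' s)) (Finset.mem_univ s)
  exact pos_of_mul_pos_left (hentry ▸ (mul_pos hα hpos).trans_le hlower) hα.le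

end Lumping

theorem stmt_9_general {S : Type*} [Fintype S] [DecidableEq S]
    {m : ℕ} (A : Fin m → Finset S)
    (hpart : ∀ s : S, ∃! i : Fin m, s ∈ A i)
    (P : Matrix S S ℝ)
    (hP0 : ∀ s s' : S, 0 ≤ P s s')
    (α : Fin m → S → ℝ)
    (hα0 : ∀ i, ∀ s : S, s ∉ A i → α i s = 0)
    (hαpos : ∀ i, ∀ s ∈ A i, 0 < α i s)
    (Pt : Matrix (Fin m) (Fin m) ℝ)
    (hPt : ∀ i j : Fin m, ∀ s ∈ A j,
      Pt i j = (∑ s' ∈ A i, α i s' * P s' s) / α j s)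
    (i : Fin m) (s : S) (hs : s ∈ A i)
    (hper : ∀ d : ℕ, (∀ n : ℕ, 1 ≤ n → 0 < (P ^ n) s s → d ∣ n) → d = 1) :
    ∀ d : ℕ, (∀ n : ℕ, 1 ≤ n → 0 < (Pt ^ n) i i → d ∣ n) → d = 1 :=
  fun d hd => hper d fun n hn hpos =>
    hd n hn (lumped_pow_pos_of_pow_pos hpart hP0 hα0 hαpos hPt hs hpos)

theorem stmt_9 {S : Type*} [Fintype S] [DecidableEq S] [Nonempty S]
    {m : ℕ} (A : Fin m → Finset S)
    (hpart : ∀ s : S, ∃! i : Fin m, s ∈ A i)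
    (hne : ∀ i, (A i).Nonempty)
    (P : Matrix S S ℝ)
    (hP0 : ∀ s s' : S, 0 ≤ P s s')
    (hP1 : ∀ s : S, ∑ s' : S, P s s' = 1)
    (α : Fin m → S → ℝ)
    (hα0 : ∀ i, ∀ s : S, s ∉ A i → α i s = 0)
    (hαpos : ∀ i, ∀ s ∈ A i, 0 < α i s)
    (hα1 : ∀ i, ∑ s ∈ A i, α i s = 1)
    (Pt : Matrix (Fin m) (Fin m) ℝ)
    (hPt : ∀ i j : Fin m, ∀ s ∈ A j,
      Pt i j = (∑ s' ∈ A i, α i s' * P s' s) / α j s)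
    (i : Fin m) (s : S) (hs : s ∈ A i)
    (hper : ∀ d : ℕ, (∀ n : ℕ, 1 ≤ n → 0 < (P ^ n) s s → d ∣ n) → d = 1) :
    ∀ d : ℕ, (∀ n : ℕ, 1 ≤ n → 0 < (Pt ^ n) i i → d ∣ n) → d = 1 :=
  stmt_9_general A hpart P hP0 α hα0 hαpos Pt hPt i s hs hper
end

section
/- Assume condition (Cond1) holds, that μ is a stationary distribution of P that respects {α_i}, and let μ̃ be defined by μ̃(A_i) = μ(A_i). Then μ̃ is a stationary distribution for P̃, i.e. μ̃ P̃ = μ̃. Moreover, if P is irreducible, then P̃ is irreducible, so μ̃ is its unique stationary distribution. -/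
/-!
Write `α` for the `m × S` matrix whose rows are the block distributions `α_i`, and `V` for the
`S × m` indicator matrix of the blocks. Then `α V = 1`, and (Cond1) says exactly `α P = P̃ α`.
Hence `μ ↦ μ V` (lumping) and `ν ↦ ν α` (lifting) carry stationary vectors of `P` respecting
`{α_i}` and stationary vectors of `P̃` into each other, and `α Pⁿ = P̃ⁿ α` transfers
irreducibility. Uniqueness for `P̃` follows from uniqueness for the irreducible `P`: the lift of a
stationary `ν` must be `μ`, so `ν = μ V`.
-/

open Finset Matrix

namespace Matrix

variable {ι S R : Type*}

section Intertwining

variable [Semiring R] {U : Matrix ι S R} {V : Matrix S ι R}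

theorem vecMul_pow_eq_self [Fintype S] [DecidableEq S] {P : Matrix S S R} {v : S → R}
    (h : v ᵥ* P = v) (n : ℕ) : v ᵥ* P ^ n = v := by
  induction n with
  | zero => simp
  | succ n ih => rw [pow_succ, ← vecMul_vecMul, ih, h]

theorem mul_pow_eq_pow_mul_of_mul_eq_s11 [Fintype ι] [Fintype S] [DecidableEq ι] [DecidableEq S]
    {P : Matrix S S R} {Q : Matrix ι ι R} (h : U * P = Q * U) (n : ℕ) :
    U * P ^ n = Q ^ n * U := by
  induction n with
  | zero => simp
  | succ n ih => rw [pow_succ, ← Matrix.mul_assoc, ih, Matrix.mul_assoc, h, ← Matrix.mul_assoc,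
      ← pow_succ]

theorem vecMul_eq_self_iff_of_mul_eq [Fintype ι] [Fintype S] [DecidableEq ι]
    {P : Matrix S S R} {Q : Matrix ι ι R} (hUV : U * V = 1) (h : U * P = Q * U) (w : ι → R) :
    w ᵥ* U ᵥ* P = w ᵥ* U ↔ w ᵥ* Q = w := by
  rw [vecMul_vecMul, h, ← vecMul_vecMul]
  refine ⟨fun hw => ?_, fun hw => by rw [hw]⟩
  calc w ᵥ* Q = w ᵥ* Q ᵥ* U ᵥ* V := by rw [vecMul_vecMul _ U, hUV, vecMul_one]
    _ = w := by rw [hw, vecMul_vecMul, hUV, vecMul_one]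

theorem sum_vecMul_eq_sum_of_mul_eq_one [Fintype ι] [Fintype S] [DecidableEq ι]
    (hUV : U * V = 1) (hV : V *ᵥ 1 = 1) (w : ι → R) : ∑ s, (w ᵥ* U) s = ∑ i, w i := by
  rw [← dotProduct_one, ← hV, dotProduct_mulVec, vecMul_vecMul, hUV, vecMul_one, dotProduct_one]

end Intertwining

section Irreducible

variable [Fintype S] [DecidableEq S] [Field R] [LinearOrder R] [IsStrictOrderedRing R]
  {P : Matrix S S R}

theorem eq_zero_of_vecMul_eq_self_of_apply_eq_zero (hP : ∀ s t, 0 ≤ P s t)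
    (hirr : ∀ s t, ∃ n : ℕ, 0 < (P ^ n) s t) {v : S → R} (hv0 : ∀ s, 0 ≤ v s)
    (hv : v ᵥ* P = v) {s₀ : S} (hs₀ : v s₀ = 0) : v = 0 := by
  funext t
  obtain ⟨n, hn⟩ := hirr t s₀
  have hle : v t * (P ^ n) t s₀ ≤ v s₀ := by
    calc v t * (P ^ n) t s₀ ≤ ∑ u, v u * (P ^ n) u s₀ :=
          single_le_sum (fun u _ => mul_nonneg (hv0 u) (pow_apply_nonneg hP n u s₀)) (mem_univ t)
      _ = v s₀ := congrFun (vecMul_pow_eq_self hv n) s₀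
  exact le_antisymm (nonpos_of_mul_nonpos_left (hs₀ ▸ hle) hn) (hv0 t)

theorem pos_of_vecMul_eq_self (hP : ∀ s t, 0 ≤ P s t)
    (hirr : ∀ s t, ∃ n : ℕ, 0 < (P ^ n) s t) {v : S → R} (hv0 : ∀ s, 0 ≤ v s)
    (hv1 : ∑ s, v s = 1) (hv : v ᵥ* P = v) (t : S) : 0 < v t := by
  refine (hv0 t).lt_of_ne' fun ht => ?_
  simp [eq_zero_of_vecMul_eq_self_of_apply_eq_zero hP hirr hv0 hv ht] at hv1

theorem eq_of_vecMul_eq_self (hP : ∀ s t, 0 ≤ P s t)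
    (hirr : ∀ s t, ∃ n : ℕ, 0 < (P ^ n) s t) {μ ν : S → R} (hμ0 : ∀ s, 0 ≤ μ s)
    (hμ1 : ∑ s, μ s = 1) (hμ : μ ᵥ* P = μ) (hν1 : ∑ s, ν s = 1) (hν : ν ᵥ* P = ν) :
    ν = μ := by
  have hμpos := pos_of_vecMul_eq_self hP hirr hμ0 hμ1 hμ
  obtain ⟨s, -, -⟩ := exists_ne_zero_of_sum_ne_zero (hμ1 ▸ one_ne_zero : ∑ s, μ s ≠ 0)
  obtain ⟨s₀, -, hmin⟩ := exists_min_image univ (fun s => ν s / μ s) ⟨s, mem_univ s⟩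
  set c := ν s₀ / μ s₀
  -- `c` is the least ratio `ν s / μ s`, so `ν - c • μ` is nonnegative, stationary,
  -- and vanishes at `s₀`
  have hzero : ν - c • μ = 0 := by
    refine eq_zero_of_vecMul_eq_self_of_apply_eq_zero hP hirr (s₀ := s₀) (fun s => ?_) ?_ ?_
    · have := hmin s (mem_univ s)
      rw [le_div_iff₀ (hμpos s)] at this
      simpa using this
    · rw [sub_vecMul, smul_vecMul, hμ, hν]
    · simp [c, div_mul_cancel₀ _ (hμpos s₀).ne']
  have hν_eq : ν = c • μ := sub_eq_zero.mp hzero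
  have hc : c = 1 := by
    simpa [hν_eq, ← mul_sum, hμ1] using hν1
  rw [hν_eq, hc, one_smul]

end Irreducible

section Lumping

variable {A : ι → Finset S}

def blockIndicator (R : Type*) [Zero R] [One R] [DecidableEq S] (A : ι → Finset S) :
    Matrix S ι R :=
  of fun s i => if s ∈ A i then 1 else 0

theorem vecMul_blockIndicator [Fintype S] [DecidableEq S] [Semiring R] (v : S → R) :
    v ᵥ* blockIndicator R A = fun i => ∑ s ∈ A i, v s := by
  funext i
  simp [vecMul, dotProduct, blockIndicator]

theorem blockIndicator_mulVec_one [Fintype ι] [DecidableEq S] [Semiring R]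
    (hA : ∀ s, ∃! i, s ∈ A i) : blockIndicator R A *ᵥ 1 = 1 := by
  funext s
  obtain ⟨i, hi, huniq⟩ := hA s
  rw [mulVec, dotProduct, Fintype.sum_eq_single i fun j hj => by
    simp [blockIndicator, show s ∉ A j from fun h => hj (huniq j h)]]
  simp [blockIndicator, hi]

theorem vecMul_apply_of_mem [Fintype ι] [Semiring R] {α : Matrix ι S R}
    (hA : ∀ s, ∃! i, s ∈ A i) (hα0 : ∀ i s, s ∉ A i → α i s = 0) (v : ι → R) {s : S} {j : ι}
    (hs : s ∈ A j) : (v ᵥ* α) s = v j * α j s :=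
  Fintype.sum_eq_single j fun i hi => by
    dsimp only
    rw [hα0 i s fun h => hi ((hA s).unique h hs), mul_zero]

theorem mul_apply_of_mem {κ : Type*} [Fintype ι] [Semiring R] {α : Matrix ι S R}
    (hA : ∀ s, ∃! i, s ∈ A i) (hα0 : ∀ i s, s ∉ A i → α i s = 0) (M : Matrix κ ι R) (k : κ)
    {s : S} {j : ι} (hs : s ∈ A j) : (M * α) k s = M k j * α j s := by
  rw [mul_apply_eq_vecMul, vecMul_apply_of_mem hA hα0 _ hs]

theorem mul_blockIndicator [Fintype S] [DecidableEq ι] [DecidableEq S] [Semiring R]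
    {α : Matrix ι S R} (hA : ∀ s, ∃! i, s ∈ A i) (hα0 : ∀ i s, s ∉ A i → α i s = 0)
    (hα1 : ∀ i, ∑ s ∈ A i, α i s = 1) : α * blockIndicator R A = 1 := by
  ext i j
  rw [mul_apply_eq_vecMul, vecMul_blockIndicator]
  dsimp only
  by_cases hij : i = j
  · subst hij
    rw [hα1, one_apply_eq]
  · rw [one_apply_ne hij]
    exact sum_eq_zero fun s hs => hα0 i s fun hi => hij ((hA s).unique hi hs)

theorem mul_eq_mul_of_forall_mem_eq_div [Fintype ι] [Fintype S] [Field R] {α : Matrix ι S R}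
    (hA : ∀ s, ∃! i, s ∈ A i) (hα0 : ∀ i s, s ∉ A i → α i s = 0)
    (hα : ∀ i, ∀ s ∈ A i, α i s ≠ 0) {P : Matrix S S R} {Q : Matrix ι ι R}
    (hQ : ∀ i j, ∀ s ∈ A j, Q i j = (∑ s' ∈ A i, α i s' * P s' s) / α j s) :
    α * P = Q * α := by
  ext i s
  obtain ⟨j, hs, -⟩ := hA s
  rw [mul_apply_of_mem hA hα0 Q i hs, hQ i j s hs, div_mul_cancel₀ _ (hα j s hs), mul_apply]
  exact (sum_subset (subset_univ _) fun s' _ hs' => by rw [hα0 i s' hs', zero_mul]).symm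

theorem exists_pow_pos_of_mul_eq [Fintype ι] [Fintype S] [DecidableEq ι] [DecidableEq S]
    [Field R] [LinearOrder R] [IsStrictOrderedRing R] {α : Matrix ι S R}
    (hA : ∀ s, ∃! i, s ∈ A i) (hne : ∀ i, (A i).Nonempty) (hα0 : ∀ i s, s ∉ A i → α i s = 0)
    (hαpos : ∀ i, ∀ s ∈ A i, 0 < α i s) {P : Matrix S S R} {Q : Matrix ι ι R}
    (hP : ∀ s t, 0 ≤ P s t) (hirr : ∀ s t, ∃ n : ℕ, 0 < (P ^ n) s t) (h : α * P = Q * α)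
    (i j : ι) : ∃ n : ℕ, 0 < (Q ^ n) i j := by
  obtain ⟨s, hs⟩ := hne j
  obtain ⟨s', hs'⟩ := hne i
  obtain ⟨n, hn⟩ := hirr s' s
  have hα_nonneg (t : S) : 0 ≤ α i t :=
    if ht : t ∈ A i then (hαpos i t ht).le else (hα0 i t ht).ge
  refine ⟨n, pos_of_mul_pos_left ?_ (hαpos j s hs).le⟩
  rw [← mul_apply_of_mem hA hα0 _ _ hs, ← mul_pow_eq_pow_mul_of_mul_eq_s11 h, mul_apply]
  exact sum_pos' (fun t _ => mul_nonneg (hα_nonneg t) (pow_apply_nonneg hP n t s))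
    ⟨s', mem_univ _, mul_pos (hαpos i s' hs') hn⟩

end Lumping

end Matrix

theorem stmt_11_general {S : Type*} [Fintype S] [DecidableEq S]
    {m : ℕ} (A : Fin m → Finset S)
    (hpart : ∀ s : S, ∃! i : Fin m, s ∈ A i)
    (hne : ∀ i, (A i).Nonempty)
    (P : Matrix S S ℝ)
    (hP0 : ∀ s s' : S, 0 ≤ P s s')
    (α : Fin m → S → ℝ)
    (hα0 : ∀ i, ∀ s : S, s ∉ A i → α i s = 0)
    (hαpos : ∀ i, ∀ s ∈ A i, 0 < α i s)
    (hα1 : ∀ i, ∑ s ∈ A i, α i s = 1)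
    (Pt : Matrix (Fin m) (Fin m) ℝ)
    (hPt : ∀ i j : Fin m, ∀ s ∈ A j,
      Pt i j = (∑ s' ∈ A i, α i s' * P s' s) / α j s)
    (μ : S → ℝ) (hμ0 : ∀ s : S, 0 ≤ μ s) (hμ1 : ∑ s : S, μ s = 1)
    (hμstat : Matrix.vecMul μ P = μ)
    (hresp : ∀ i : Fin m, ∀ s ∈ A i, μ s = α i s * ∑ s' ∈ A i, μ s') :
    Matrix.vecMul (fun i => ∑ s ∈ A i, μ s) Pt = (fun i => ∑ s ∈ A i, μ s) ∧
      ((∀ s s' : S, ∃ n : ℕ, 0 < (P ^ n) s s') →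
        (∀ i j : Fin m, ∃ n : ℕ, 0 < (Pt ^ n) i j) ∧
        ∀ ν : Fin m → ℝ, (∀ i, 0 ≤ ν i) → (∑ i : Fin m, ν i = 1) →
          Matrix.vecMul ν Pt = ν → ν = fun i => ∑ s ∈ A i, μ s) := by
  have hUV := mul_blockIndicator (R := ℝ) hpart hα0 hα1
  have hint := mul_eq_mul_of_forall_mem_eq_div hpart hα0 (fun i s hs => (hαpos i s hs).ne') hPt
  have hμ : μ ᵥ* blockIndicator ℝ A ᵥ* α = μ := funext fun s => by
    obtain ⟨j, hs, -⟩ := hpart s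
    rw [vecMul_apply_of_mem hpart hα0 _ hs, vecMul_blockIndicator, hresp j s hs, mul_comm]
  rw [← vecMul_blockIndicator μ]
  refine ⟨(vecMul_eq_self_iff_of_mul_eq hUV hint _).mp (by rw [hμ, hμstat]), fun hirr =>
    ⟨exists_pow_pos_of_mul_eq hpart hne hα0 hαpos hP0 hirr hint, fun ν _ hν1 hν => ?_⟩⟩
  have hlift : ν ᵥ* α = μ := eq_of_vecMul_eq_self hP0 hirr hμ0 hμ1 hμstat
    (by rw [sum_vecMul_eq_sum_of_mul_eq_one hUV (blockIndicator_mulVec_one hpart), hν1])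
    ((vecMul_eq_self_iff_of_mul_eq hUV hint ν).mpr hν)
  rw [← hlift, vecMul_vecMul ν (α : Matrix (Fin m) S ℝ), hUV, vecMul_one]

theorem stmt_11 {S : Type*} [Fintype S] [DecidableEq S] [Nonempty S]
    {m : ℕ} (A : Fin m → Finset S)
    (hpart : ∀ s : S, ∃! i : Fin m, s ∈ A i)
    (hne : ∀ i, (A i).Nonempty)
    (P : Matrix S S ℝ)
    (hP0 : ∀ s s' : S, 0 ≤ P s s')
    (hP1 : ∀ s : S, ∑ s' : S, P s s' = 1)
    (α : Fin m → S → ℝ)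
    (hα0 : ∀ i, ∀ s : S, s ∉ A i → α i s = 0)
    (hαpos : ∀ i, ∀ s ∈ A i, 0 < α i s)
    (hα1 : ∀ i, ∑ s ∈ A i, α i s = 1)
    (Pt : Matrix (Fin m) (Fin m) ℝ)
    (hPt : ∀ i j : Fin m, ∀ s ∈ A j,
      Pt i j = (∑ s' ∈ A i, α i s' * P s' s) / α j s)
    (μ : S → ℝ) (hμ0 : ∀ s : S, 0 ≤ μ s) (hμ1 : ∑ s : S, μ s = 1)
    (hμstat : Matrix.vecMul μ P = μ)
    (hresp : ∀ i : Fin m, ∀ s ∈ A i, μ s = α i s * ∑ s' ∈ A i, μ s') :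
    Matrix.vecMul (fun i => ∑ s ∈ A i, μ s) Pt = (fun i => ∑ s ∈ A i, μ s) ∧
      ((∀ s s' : S, ∃ n : ℕ, 0 < (P ^ n) s s') →
        (∀ i j : Fin m, ∃ n : ℕ, 0 < (Pt ^ n) i j) ∧
        ∀ ν : Fin m → ℝ, (∀ i, 0 ≤ ν i) → (∑ i : Fin m, ν i = 1) →
          Matrix.vecMul ν Pt = ν → ν = fun i => ∑ s ∈ A i, μ s) :=
  stmt_11_general A hpart hne P hP0 α hα0 hαpos hα1 Pt hPt μ hμ0 hμ1 hμstat hresp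
end

section
/- (Cesàro convergence of aggregation) Assume condition (Cond1) holds and P is irreducible with stationary distribution μ. Let π be any initial probability distribution on S and π̃(A_i) = π(A_i). Then as n → ∞: (i) (1/n)∑_{k=1}^n (π̃ P̃^k)(A_i) − (1/n)∑_{k=1}^n (π P^k)(A_i) → 0 for every i; and (ii) for every i and s ∈ A_i, ((1/n)∑_{k=1}^n (π P^k)(s)) / ((1/n)∑_{k=1}^n (π̃ P̃^k)(A_i)) → α_i(s). -/
/-!
Cesàro means of a distribution under a stochastic matrix stay in the compact simplex, and one
more step moves them by `O(1/n)`, so each of their cluster points is stationary; hence they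
converge whenever the stationary distribution is unique, which irreducibility guarantees.
Condition (Cond1) says `α P = P̃ α` (with `α` the matrix of rows `α_i`): lifting `θ ↦ θ α`
therefore sends stationary distributions of `P̃` to those of `P`, and summing over blocks undoes
the lift. So `P̃` is stochastic with unique stationary distribution `μ̃ = (μ(A_i))_i`, and
`μ = μ̃ α`, i.e. `μ(s) = μ(A_i) α_i(s)` on `A_i`; both claims follow by passing to the limit.
-/

open Finset Matrix Filter

namespace Matrix

variable {m n : Type*} [Fintype m] [Fintype n]

lemma vecMul_mem_stdSimplex {M : Matrix m n ℝ} (h0 : ∀ i j, 0 ≤ M i j) (h1 : M *ᵥ 1 = 1)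
    {x : m → ℝ} (hx : x ∈ stdSimplex ℝ m) : x ᵥ* M ∈ stdSimplex ℝ n := by
  refine ⟨fun j => sum_nonneg fun i _ => mul_nonneg (hx.1 i) (h0 i j), ?_⟩
  rw [← dotProduct_one, ← dotProduct_mulVec, h1, dotProduct_one, hx.2]

variable [DecidableEq n]

/-- `(1/N) ∑_{k=1}^N x M^k`, which is `0` for `N = 0`. -/
noncomputable def cesaroMean (x : n → ℝ) (M : Matrix n n ℝ) (N : ℕ) : n → ℝ :=
  (N : ℝ)⁻¹ • ∑ k ∈ range N, x ᵥ* M ^ (k + 1)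

lemma cesaroMean_apply (x : n → ℝ) (M : Matrix n n ℝ) (N : ℕ) (s : n) :
    cesaroMean x M N s = 1 / (N : ℝ) * ∑ k ∈ range N, (x ᵥ* M ^ (k + 1)) s := by
  simp [cesaroMean, one_div]

lemma cesaroMean_vecMul_sub (x : n → ℝ) (M : Matrix n n ℝ) (N : ℕ) :
    cesaroMean x M N ᵥ* M - cesaroMean x M N = (N : ℝ)⁻¹ • (x ᵥ* M ^ (N + 1) - x ᵥ* M) := by
  have hshift : ∀ k, (x ᵥ* M ^ (k + 1)) ᵥ* M = x ᵥ* M ^ (k + 1 + 1) := fun k => by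
    rw [vecMul_vecMul, ← pow_succ]
  rw [cesaroMean, smul_vecMul, sum_vecMul, ← smul_sub, ← sum_sub_distrib]
  simp only [hshift]
  rw [sum_range_sub (fun k => x ᵥ* M ^ (k + 1)), zero_add, pow_one]

variable {M : Matrix n n ℝ} {x : n → ℝ}

lemma cesaroMean_mem_stdSimplex (hM : M ∈ rowStochastic ℝ n) (hx : x ∈ stdSimplex ℝ n)
    {N : ℕ} (hN : N ≠ 0) : cesaroMean x M N ∈ stdSimplex ℝ n := by
  have hpow : ∀ k, x ᵥ* M ^ (k + 1) ∈ stdSimplex ℝ n := fun k =>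
    vecMul_mem_stdSimplex (pow_mem hM _).1 (pow_mem hM _).2 hx
  rw [cesaroMean, smul_sum]
  refine (convex_stdSimplex ℝ n).sum_mem (fun _ _ => by positivity) ?_ fun k _ => hpow k
  rw [sum_const, card_range, nsmul_eq_mul, mul_inv_cancel₀ (by exact_mod_cast hN)]

lemma tendsto_cesaroMean_vecMul_sub (hM : M ∈ rowStochastic ℝ n) (hx : x ∈ stdSimplex ℝ n) :
    Tendsto (fun N => cesaroMean x M N ᵥ* M - cesaroMean x M N) atTop (nhds 0) := by
  simp only [cesaroMean_vecMul_sub]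
  refine (tendsto_inv_atTop_nhds_zero_nat (𝕜 := ℝ)).zero_smul_isBoundedUnder_le ⟨2, ?_⟩
  refine eventually_map.2 (Eventually.of_forall fun N => ?_)
  have hpow : ∀ k, ‖x ᵥ* M ^ k‖ ≤ 1 := fun k => mem_closedBall_zero_iff.1 <|
    stdSimplex_subset_closedBall (vecMul_mem_stdSimplex (pow_mem hM _).1 (pow_mem hM _).2 hx)
  calc ‖x ᵥ* M ^ (N + 1) - x ᵥ* M‖ ≤ ‖x ᵥ* M ^ (N + 1)‖ + ‖x ᵥ* M ^ 1‖ := by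
        rw [pow_one]; exact norm_sub_le _ _
    _ ≤ 2 := by linarith [hpow (N + 1), hpow 1]

lemma vecMul_eq_of_mapClusterPt_cesaroMean (hM : M ∈ rowStochastic ℝ n)
    (hx : x ∈ stdSimplex ℝ n) {a : n → ℝ} (ha : MapClusterPt a atTop (cesaroMean x M)) :
    a ᵥ* M = a := by
  have hcont : Continuous fun v : n → ℝ => v ᵥ* M - v :=
    (Continuous.matrix_vecMul continuous_id continuous_const).sub continuous_id
  have hcl := ha.continuousAt_comp hcont.continuousAt
  exact sub_eq_zero.1 <| eq_of_nhds_neBot <|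
    ClusterPt.mono hcl (tendsto_cesaroMean_vecMul_sub hM hx)

lemma exists_mem_stdSimplex_vecMul_eq (hM : M ∈ rowStochastic ℝ n) (hx : x ∈ stdSimplex ℝ n) :
    ∃ a ∈ stdSimplex ℝ n, a ᵥ* M = a := by
  have hmem : ∀ᶠ N in atTop, cesaroMean x M N ∈ stdSimplex ℝ n :=
    eventually_ne_atTop 0 |>.mono fun _ hN => cesaroMean_mem_stdSimplex hM hx hN
  obtain ⟨a, ha, hcl⟩ :=
    (isCompact_stdSimplex ℝ n).exists_mapClusterPt_of_frequently hmem.frequently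
  exact ⟨a, ha, vecMul_eq_of_mapClusterPt_cesaroMean hM hx hcl⟩

lemma tendsto_cesaroMean (hM : M ∈ rowStochastic ℝ n) (hx : x ∈ stdSimplex ℝ n) {ρ : n → ℝ}
    (huniq : ∀ a ∈ stdSimplex ℝ n, a ᵥ* M = a → a = ρ) :
    Tendsto (cesaroMean x M) atTop (nhds ρ) :=
  (isCompact_stdSimplex ℝ n).tendsto_nhds_of_unique_mapClusterPt
    (eventually_ne_atTop 0 |>.mono fun _ hN => cesaroMean_mem_stdSimplex hM hx hN)
    fun a ha hcl => huniq a ha (vecMul_eq_of_mapClusterPt_cesaroMean hM hx hcl)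

lemma pos_of_vecMul_eq_of_pos (hM : ∀ i j, 0 ≤ M i j)
    (hirr : ∀ i j, ∃ k : ℕ, 0 < (M ^ k) i j) {w : n → ℝ} (hw0 : ∀ i, 0 ≤ w i)
    (hw : w ᵥ* M = w) {i : n} (hi : 0 < w i) (j : n) : 0 < w j := by
  have hwk : ∀ k : ℕ, w ᵥ* M ^ k = w := by
    intro k
    induction k with
    | zero => rw [pow_zero, vecMul_one]
    | succ k ih => rw [pow_succ, ← vecMul_vecMul, ih, hw]
  obtain ⟨k, hk⟩ := hirr i j
  calc 0 < w i * (M ^ k) i j := mul_pos hi hk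
    _ ≤ ∑ l, w l * (M ^ k) l j :=
      single_le_sum (f := fun l => w l * (M ^ k) l j)
        (fun l _ => mul_nonneg (hw0 l) (pow_apply_nonneg hM k l j)) (mem_univ i)
    _ = w j := congrFun (hwk k) j

lemma pos_of_mem_stdSimplex_of_vecMul_eq (hM : ∀ i j, 0 ≤ M i j)
    (hirr : ∀ i j, ∃ k : ℕ, 0 < (M ^ k) i j) {μ : n → ℝ} (hμ : μ ∈ stdSimplex ℝ n)
    (hμM : μ ᵥ* M = μ) (j : n) : 0 < μ j := by
  obtain ⟨i, -, hi⟩ : ∃ i ∈ univ, (0 : ℝ) < μ i :=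
    exists_lt_of_sum_lt (by simp [hμ.2])
  exact pos_of_vecMul_eq_of_pos hM hirr hμ.1 hμM hi j

/-- `ν - c • μ` with the largest admissible `c` is a nonnegative stationary vector vanishing
somewhere, hence everywhere. -/
lemma eq_of_mem_stdSimplex_of_vecMul_eq (hM : ∀ i j, 0 ≤ M i j)
    (hirr : ∀ i j, ∃ k : ℕ, 0 < (M ^ k) i j) {μ ν : n → ℝ}
    (hμ : μ ∈ stdSimplex ℝ n) (hμM : μ ᵥ* M = μ) (hν : ν ∈ stdSimplex ℝ n) (hνM : ν ᵥ* M = ν) :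
    ν = μ := by
  have hμpos := pos_of_mem_stdSimplex_of_vecMul_eq hM hirr hμ hμM
  obtain ⟨i, -, hmin⟩ := exists_min_image univ (fun j => ν j / μ j)
    (nonempty_of_sum_ne_zero (by rw [hμ.2]; exact one_ne_zero))
  set c := ν i / μ i
  set w := ν - c • μ with hw
  have hw0 : ∀ j, 0 ≤ w j := fun j => by
    have := (le_div_iff₀ (hμpos j)).1 (hmin j (mem_univ j))
    simp only [hw, Pi.sub_apply, Pi.smul_apply, smul_eq_mul]
    linarith
  have hwM : w ᵥ* M = w := by rw [hw, sub_vecMul, smul_vecMul, hμM, hνM]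
  have hwi : w i = 0 := by
    simp only [hw, Pi.sub_apply, Pi.smul_apply, smul_eq_mul, c]
    rw [div_mul_cancel₀ _ (hμpos i).ne', sub_self]
  have hw_eq : w = 0 := funext fun j => by
    by_contra hj
    exact (pos_of_vecMul_eq_of_pos hM hirr hw0 hwM ((hw0 j).lt_of_ne' hj) i).ne' hwi
  have hνc : ν = c • μ := sub_eq_zero.1 hw_eq
  have hc : c = 1 := by
    simpa [hν.2, hμ.2, ← mul_sum] using (congrArg (fun v => ∑ j, v j) hνc).symm
  rw [hνc, hc, one_smul]

end Matrix

section Aggregation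

variable {S ι : Type*} {A : ι → Finset S}

def aggregate (A : ι → Finset S) (v : S → ℝ) : ι → ℝ := fun i => ∑ s ∈ A i, v s

lemma sum_aggregate [Fintype S] [Fintype ι] (hA : ∀ s, ∃! i, s ∈ A i) (v : S → ℝ) :
    ∑ i, aggregate A v i = ∑ s, v s := by
  classical
  have hdisj : Set.PairwiseDisjoint (↑(univ : Finset ι)) A := fun i _ j _ hij =>
    disjoint_left.2 fun s hi hj => hij ((hA s).unique hi hj)
  have hcover : univ.biUnion A = univ :=
    eq_univ_of_forall fun s => mem_biUnion.2 ⟨_, mem_univ _, (hA s).exists.choose_spec⟩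
  rw [← hcover, sum_biUnion hdisj]
  rfl

lemma aggregate_mem_stdSimplex [Fintype S] [Fintype ι] (hA : ∀ s, ∃! i, s ∈ A i)
    {v : S → ℝ} (hv : v ∈ stdSimplex ℝ S) : aggregate A v ∈ stdSimplex ℝ ι :=
  ⟨fun _ => sum_nonneg fun s _ => hv.1 s, by rw [sum_aggregate hA, hv.2]⟩

structure IsBlockDistribution (A : ι → Finset S) (α : Matrix ι S ℝ) : Prop where
  partition : ∀ s, ∃! i, s ∈ A i
  eq_zero : ∀ i, ∀ s ∉ A i, α i s = 0
  pos : ∀ i, ∀ s ∈ A i, 0 < α i s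
  sum_eq_one : ∀ i, ∑ s ∈ A i, α i s = 1

namespace IsBlockDistribution

variable {α : Matrix ι S ℝ} {P : Matrix S S ℝ} {Pt : Matrix ι ι ℝ}

lemma nonneg (hα : IsBlockDistribution A α) (i : ι) (s : S) : 0 ≤ α i s := by
  by_cases hs : s ∈ A i
  · exact (hα.pos i s hs).le
  · exact (hα.eq_zero i s hs).ge

lemma eq_zero_of_mem (hα : IsBlockDistribution A α) {i j : ι} (hij : i ≠ j) {s : S}
    (hs : s ∈ A j) : α i s = 0 :=
  hα.eq_zero i s fun hi => hij ((hα.partition s).unique hi hs)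

lemma sum_mul_eq_sum_block [Fintype S] (hα : IsBlockDistribution A α) (i : ι) (f : S → ℝ) :
    ∑ s, α i s * f s = ∑ s ∈ A i, α i s * f s :=
  (sum_subset (subset_univ _) fun s _ hs => by rw [hα.eq_zero i s hs, zero_mul]).symm

lemma mulVec_one [Fintype S] (hα : IsBlockDistribution A α) : α *ᵥ 1 = 1 := funext fun i => by
  simpa [mulVec, dotProduct, hα.sum_eq_one i] using hα.sum_mul_eq_sum_block i 1

lemma vecMul_mem_stdSimplex [Fintype S] [Fintype ι] (hα : IsBlockDistribution A α)
    {θ : ι → ℝ} (hθ : θ ∈ stdSimplex ℝ ι) : θ ᵥ* α ∈ stdSimplex ℝ S :=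
  Matrix.vecMul_mem_stdSimplex hα.nonneg hα.mulVec_one hθ

lemma vecMul_apply_of_mem [Fintype ι] (hα : IsBlockDistribution A α) (θ : ι → ℝ) {i : ι}
    {s : S} (hs : s ∈ A i) : (θ ᵥ* α) s = θ i * α i s :=
  sum_eq_single i (fun _ _ hji => mul_eq_zero_of_right _ (hα.eq_zero_of_mem hji hs))
    fun h => absurd (mem_univ i) h

lemma aggregate_vecMul [Fintype ι] (hα : IsBlockDistribution A α) (θ : ι → ℝ) :
    aggregate A (θ ᵥ* α) = θ := funext fun j => by
  simp only [aggregate, vecMul, dotProduct]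
  rw [sum_comm, sum_eq_single j]
  · rw [← mul_sum, hα.sum_eq_one, mul_one]
  · intro i _ hij
    rw [← mul_sum, sum_eq_zero fun s hs => hα.eq_zero_of_mem hij hs, mul_zero]
  · exact fun h => absurd (mem_univ j) h

/-- Condition (Cond1) in matrix form: `α P = P̃ α`. -/
lemma mul_eq_mul [Fintype S] [Fintype ι] (hα : IsBlockDistribution A α)
    (hPt : ∀ i j, ∀ s ∈ A j, Pt i j = (∑ s' ∈ A i, α i s' * P s' s) / α j s) :
    α * P = Pt * α := by
  ext i s
  obtain ⟨j, hj, -⟩ := hα.partition s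
  rw [mul_apply, mul_apply, hα.sum_mul_eq_sum_block i, sum_eq_single j, hPt i j s hj,
    div_mul_cancel₀ _ (hα.pos j s hj).ne']
  · exact fun k _ hkj => by rw [hα.eq_zero_of_mem hkj hj, mul_zero]
  · exact fun h => absurd (mem_univ j) h

lemma mem_rowStochastic [Fintype S] [DecidableEq S] [Fintype ι] [DecidableEq ι]
    (hα : IsBlockDistribution A α) (hne : ∀ j, (A j).Nonempty) (hP : P ∈ rowStochastic ℝ S)
    (hPt : ∀ i j, ∀ s ∈ A j, Pt i j = (∑ s' ∈ A i, α i s' * P s' s) / α j s) :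
    Pt ∈ rowStochastic ℝ ι := by
  refine ⟨fun i j => ?_, ?_⟩
  · obtain ⟨s, hs⟩ := hne j
    rw [hPt i j s hs]
    exact div_nonneg (sum_nonneg fun s' _ => mul_nonneg (hα.nonneg i s') (hP.1 s' s))
      (hα.nonneg j s)
  · rw [← hα.mulVec_one, mulVec_mulVec, ← hα.mul_eq_mul hPt, ← mulVec_mulVec, hP.2]

/-- By `α P = P̃ α`, lifting through `α` maps stationary distributions of `P̃` to ones of `P`. -/
lemma eq_aggregate_of_vecMul_eq [Fintype S] [Fintype ι]
    (hα : IsBlockDistribution A α)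
    (hPt : ∀ i j, ∀ s ∈ A j, Pt i j = (∑ s' ∈ A i, α i s' * P s' s) / α j s)
    {μ : S → ℝ} (huniq : ∀ ν ∈ stdSimplex ℝ S, ν ᵥ* P = ν → ν = μ)
    {θ : ι → ℝ} (hθ : θ ∈ stdSimplex ℝ ι) (hθPt : θ ᵥ* Pt = θ) :
    θ ᵥ* α = μ ∧ θ = aggregate A μ := by
  have hlift : θ ᵥ* α = μ := huniq _ (hα.vecMul_mem_stdSimplex hθ) <| by
    rw [vecMul_vecMul, hα.mul_eq_mul hPt, ← vecMul_vecMul, hθPt]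
  exact ⟨hlift, by rw [← hlift, hα.aggregate_vecMul]⟩

end IsBlockDistribution

end Aggregation

theorem stmt_12_general {S : Type*} [Fintype S] [DecidableEq S]
    {m : ℕ} (A : Fin m → Finset S)
    (hpart : ∀ s : S, ∃! i : Fin m, s ∈ A i)
    (hne : ∀ i, (A i).Nonempty)
    (P : Matrix S S ℝ)
    (hP0 : ∀ s s' : S, 0 ≤ P s s')
    (hP1 : ∀ s : S, ∑ s' : S, P s s' = 1)
    (α : Fin m → S → ℝ)
    (hα0 : ∀ i, ∀ s : S, s ∉ A i → α i s = 0)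
    (hαpos : ∀ i, ∀ s ∈ A i, 0 < α i s)
    (hα1 : ∀ i, ∑ s ∈ A i, α i s = 1)
    (Pt : Matrix (Fin m) (Fin m) ℝ)
    (hPt : ∀ i j : Fin m, ∀ s ∈ A j,
      Pt i j = (∑ s' ∈ A i, α i s' * P s' s) / α j s)
    (hirr : ∀ s s' : S, ∃ n : ℕ, 0 < (P ^ n) s s')
    (μ : S → ℝ) (hμ0 : ∀ s : S, 0 ≤ μ s) (hμ1 : ∑ s : S, μ s = 1)
    (hμstat : Matrix.vecMul μ P = μ)
    (π : S → ℝ) (hπ0 : ∀ s : S, 0 ≤ π s) (hπ1 : ∑ s : S, π s = 1) :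
    (∀ i : Fin m,
        Filter.Tendsto (fun n : ℕ =>
          (1 / (n : ℝ)) * (∑ k ∈ Finset.range n,
              Matrix.vecMul (fun i' => ∑ s ∈ A i', π s) (Pt ^ (k + 1)) i)
            - (1 / (n : ℝ)) * ∑ k ∈ Finset.range n, ∑ s ∈ A i, Matrix.vecMul π (P ^ (k + 1)) s)
          Filter.atTop (nhds 0)) ∧
      (∀ i : Fin m, ∀ s ∈ A i,
        Filter.Tendsto (fun n : ℕ =>
          ((1 / (n : ℝ)) * ∑ k ∈ Finset.range n, Matrix.vecMul π (P ^ (k + 1)) s)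
            / ((1 / (n : ℝ)) * ∑ k ∈ Finset.range n,
                Matrix.vecMul (fun i' => ∑ s' ∈ A i', π s') (Pt ^ (k + 1)) i))
          Filter.atTop (nhds (α i s))) := by
  have hα : IsBlockDistribution A α := ⟨hpart, hα0, hαpos, hα1⟩
  have hPstoch : P ∈ rowStochastic ℝ S := mem_rowStochastic_iff_sum.2 ⟨hP0, hP1⟩
  have hPtstoch : Pt ∈ rowStochastic ℝ (Fin m) := hα.mem_rowStochastic hne hPstoch hPt
  have hμ : μ ∈ stdSimplex ℝ S := ⟨hμ0, hμ1⟩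
  have hπ : π ∈ stdSimplex ℝ S := ⟨hπ0, hπ1⟩
  have hπt : aggregate A π ∈ stdSimplex ℝ (Fin m) := aggregate_mem_stdSimplex hpart hπ
  have huniq : ∀ ν ∈ stdSimplex ℝ S, ν ᵥ* P = ν → ν = μ := fun ν hν hνP =>
    eq_of_mem_stdSimplex_of_vecMul_eq hP0 hirr hμ hμstat hν hνP
  obtain ⟨θ, hθ, hθPt⟩ := exists_mem_stdSimplex_vecMul_eq hPtstoch hπt
  obtain ⟨hθα, rfl⟩ := hα.eq_aggregate_of_vecMul_eq hPt huniq hθ hθPt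
  have hlimP := tendsto_pi_nhds.1 (tendsto_cesaroMean hPstoch hπ huniq)
  have hlimPt := tendsto_pi_nhds.1 <| tendsto_cesaroMean hPtstoch hπt fun θ' hθ' hθ'Pt =>
    (hα.eq_aggregate_of_vecMul_eq hPt huniq hθ' hθ'Pt).2
  simp only [cesaroMean_apply] at hlimP hlimPt
  refine ⟨fun i => ?_, fun i s hs => ?_⟩
  · have hlim := (hlimPt i).sub (tendsto_finsetSum (A i) fun s _ => hlimP s)
    change Tendsto _ atTop (nhds (aggregate A μ i - aggregate A μ i)) at hlim
    rw [sub_self] at hlim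
    refine hlim.congr fun n => ?_
    simp only [mul_sum]
    rw [Finset.sum_comm]
    rfl
  · have hpos : 0 < aggregate A μ i := sum_pos (fun s _ =>
      pos_of_mem_stdSimplex_of_vecMul_eq hP0 hirr hμ hμstat s) (hne i)
    have hμs : μ s = aggregate A μ i * α i s := by
      rw [← hα.vecMul_apply_of_mem _ hs, hθα]
    have := (hlimP s).div (hlimPt i) hpos.ne'
    rwa [hμs, mul_div_cancel_left₀ _ hpos.ne'] at this

theorem stmt_12 {S : Type*} [Fintype S] [DecidableEq S] [Nonempty S]
    {m : ℕ} (A : Fin m → Finset S)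
    (hpart : ∀ s : S, ∃! i : Fin m, s ∈ A i)
    (hne : ∀ i, (A i).Nonempty)
    (P : Matrix S S ℝ)
    (hP0 : ∀ s s' : S, 0 ≤ P s s')
    (hP1 : ∀ s : S, ∑ s' : S, P s s' = 1)
    (α : Fin m → S → ℝ)
    (hα0 : ∀ i, ∀ s : S, s ∉ A i → α i s = 0)
    (hαpos : ∀ i, ∀ s ∈ A i, 0 < α i s)
    (hα1 : ∀ i, ∑ s ∈ A i, α i s = 1)
    (Pt : Matrix (Fin m) (Fin m) ℝ)
    (hPt : ∀ i j : Fin m, ∀ s ∈ A j,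
      Pt i j = (∑ s' ∈ A i, α i s' * P s' s) / α j s)
    (hirr : ∀ s s' : S, ∃ n : ℕ, 0 < (P ^ n) s s')
    (μ : S → ℝ) (hμ0 : ∀ s : S, 0 ≤ μ s) (hμ1 : ∑ s : S, μ s = 1)
    (hμstat : Matrix.vecMul μ P = μ)
    (π : S → ℝ) (hπ0 : ∀ s : S, 0 ≤ π s) (hπ1 : ∑ s : S, π s = 1) :
    (∀ i : Fin m,
        Filter.Tendsto (fun n : ℕ =>
          (1 / (n : ℝ)) * (∑ k ∈ Finset.range n,
              Matrix.vecMul (fun i' => ∑ s ∈ A i', π s) (Pt ^ (k + 1)) i)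
            - (1 / (n : ℝ)) * ∑ k ∈ Finset.range n, ∑ s ∈ A i, Matrix.vecMul π (P ^ (k + 1)) s)
          Filter.atTop (nhds 0)) ∧
      (∀ i : Fin m, ∀ s ∈ A i,
        Filter.Tendsto (fun n : ℕ =>
          ((1 / (n : ℝ)) * ∑ k ∈ Finset.range n, Matrix.vecMul π (P ^ (k + 1)) s)
            / ((1 / (n : ℝ)) * ∑ k ∈ Finset.range n,
                Matrix.vecMul (fun i' => ∑ s' ∈ A i', π s') (Pt ^ (k + 1)) i))
          Filter.atTop (nhds (α i s))) :=
  stmt_12_general A hpart hne P hP0 hP1 α hα0 hαpos hα1 Pt hPt hirr μ hμ0 hμ1 hμstat π hπ0 hπ1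
end

section
/- Under condition (Cond2), the aggregated matrix Q̃ is a generator matrix: its off-diagonal entries are nonnegative and each of its rows sums to 0, i.e. for every i, ∑_{j=1}^m Q̃(A_i, A_j) = 0. -/
open Finset Matrix Filter

section Partition

variable {ι S : Type*} {A : ι → Finset S}

theorem ne_of_mem_of_mem_of_existsUnique (hpart : ∀ s : S, ∃! i : ι, s ∈ A i)
    {i j : ι} {s t : S} (hs : s ∈ A i) (ht : t ∈ A j) (hij : i ≠ j) : s ≠ t := by
  rintro rfl
  exact hij ((hpart s).unique hs ht)

theorem sum_sum_eq_sum_of_existsUnique [Fintype ι] [Fintype S] {M : Type*} [AddCommMonoid M]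
    (hpart : ∀ s : S, ∃! i : ι, s ∈ A i) (f : S → M) :
    ∑ i, ∑ s ∈ A i, f s = ∑ s, f s := by
  classical
  calc ∑ i, ∑ s ∈ A i, f s = ∑ i, ∑ s, if s ∈ A i then f s else 0 := by
        simp only [sum_ite_mem, univ_inter]
    _ = ∑ s, ∑ i, if s ∈ A i then f s else 0 := sum_comm
    _ = ∑ s, f s := by
        refine sum_congr rfl fun s _ => ?_
        obtain ⟨i, hi, huniq⟩ := hpart s
        rw [Fintype.sum_eq_single i fun j hj => if_neg fun h => hj (huniq j h), if_pos hi]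

end Partition

theorem sum_sum_mul_eq_zero_of_row_sum_eq_zero {S R : Type*} [Fintype S] [CommSemiring R]
    {Q : Matrix S S R} (hQrow : ∀ s, ∑ s', Q s s' = 0) (T : Finset S) (v : S → R) :
    ∑ s, ∑ s' ∈ T, v s' * Q s' s = 0 := by
  rw [sum_comm]
  simp [← mul_sum, hQrow]

theorem eq_sum_of_forall_mul_eq {S K : Type*} [CommSemiring K] {T : Finset S} {a g : S → K}
    {c : K} (ha : ∑ s ∈ T, a s = 1) (h : ∀ s ∈ T, a s * c = g s) : c = ∑ s ∈ T, g s :=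
  calc c = ∑ s ∈ T, a s * c := by rw [← sum_mul, ha, one_mul]
    _ = ∑ s ∈ T, g s := sum_congr rfl h

theorem stmt_14_general {S : Type*} [Fintype S]
    {m : ℕ} (A : Fin m → Finset S)
    (hpart : ∀ s : S, ∃! i : Fin m, s ∈ A i)
    (hne : ∀ i, (A i).Nonempty)
    (Q : Matrix S S ℝ)
    (hQ0 : ∀ s s' : S, s ≠ s' → 0 ≤ Q s s')
    (hQrow : ∀ s : S, ∑ s' : S, Q s s' = 0)
    (α : Fin m → S → ℝ)
    (hαpos : ∀ i, ∀ s ∈ A i, 0 < α i s)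
    (hα1 : ∀ i, ∑ s ∈ A i, α i s = 1)
    (Qt : Matrix (Fin m) (Fin m) ℝ)
    (hQt : ∀ i j : Fin m, ∀ s ∈ A j,
      Qt i j = (∑ s' ∈ A i, α i s' * Q s' s) / α j s) :
    (∀ i j : Fin m, i ≠ j → 0 ≤ Qt i j) ∧ (∀ i : Fin m, ∑ j : Fin m, Qt i j = 0) := by
  constructor
  · intro i j hij
    obtain ⟨s, hs⟩ := hne j
    rw [hQt i j s hs]
    refine div_nonneg (sum_nonneg fun s' hs' => ?_) (hαpos j s hs).le
    exact mul_nonneg (hαpos i s' hs').le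
      (hQ0 s' s (ne_of_mem_of_mem_of_existsUnique hpart hs' hs hij))
  · intro i
    -- Averaging (Cond2) against α j turns each entry into the total flux from A i into A j.
    have hentry : ∀ j, Qt i j = ∑ s ∈ A j, ∑ s' ∈ A i, α i s' * Q s' s := fun j =>
      eq_sum_of_forall_mul_eq (hα1 j) fun s hs => by
        rw [hQt i j s hs, mul_div_cancel₀ _ (hαpos j s hs).ne']
    rw [sum_congr rfl fun j _ => hentry j, sum_sum_eq_sum_of_existsUnique hpart,
      sum_sum_mul_eq_zero_of_row_sum_eq_zero hQrow]

theorem stmt_14 {S : Type*} [Fintype S] [DecidableEq S] [Nonempty S]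
    {m : ℕ} (A : Fin m → Finset S)
    (hpart : ∀ s : S, ∃! i : Fin m, s ∈ A i)
    (hne : ∀ i, (A i).Nonempty)
    (Q : Matrix S S ℝ)
    (hQ0 : ∀ s s' : S, s ≠ s' → 0 ≤ Q s s')
    (hQrow : ∀ s : S, ∑ s' : S, Q s s' = 0)
    (α : Fin m → S → ℝ)
    (hα0 : ∀ i, ∀ s : S, s ∉ A i → α i s = 0)
    (hαpos : ∀ i, ∀ s ∈ A i, 0 < α i s)
    (hα1 : ∀ i, ∑ s ∈ A i, α i s = 1)
    (Qt : Matrix (Fin m) (Fin m) ℝ)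
    (hQt : ∀ i j : Fin m, ∀ s ∈ A j,
      Qt i j = (∑ s' ∈ A i, α i s' * Q s' s) / α j s) :
    (∀ i j : Fin m, i ≠ j → 0 ≤ Qt i j) ∧ (∀ i : Fin m, ∑ j : Fin m, Qt i j = 0) :=
  stmt_14_general A hpart hne Q hQ0 hQrow α hαpos hα1 Qt hQt
end

section
/- (Continuous-time lumpability and invertibility) Assume condition (Cond2) holds and that the initial probability distribution π on S respects {α_i}; let π̃(A_i) = π(A_i). Then for all t ≥ 0: (i) (π̃ · exp(tQ̃))(A_i) = (π · exp(tQ))(A_i) for every i; and (ii) (π · exp(tQ))(s) = (π̃ · exp(tQ̃))(A_i) · α_i(s) for every i and s ∈ A_i, where exp denotes the matrix exponential. -/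
/-!
Collect the weights into the matrix `B = (α i s)`, whose rows are the `α i`. Condition (Cond2)
says exactly that `B * Q = Q̃ * B`, and a distribution respecting the `α i` is `π = π̃ ᵥ* B`.
The intertwining relation passes to the exponential series, so
`π ᵥ* exp (t Q) = π̃ ᵥ* (B * exp (t Q)) = (π̃ ᵥ* exp (t Q̃)) ᵥ* B`, which is (ii); summing (ii)
over a block and using `∑ α i = 1` gives (i).
-/

open Finset Matrix

section

-- `exp` only sees the topology, so any norm inducing the product topology will do.
attribute [local instance] Matrix.linftyOpNormedRing Matrix.linftyOpNormedAlgebra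

theorem Matrix.mul_exp_eq_exp_mul_of_mul_eq {𝕂 l n : Type*} [RCLike 𝕂]
    [Fintype l] [DecidableEq l] [Fintype n] [DecidableEq n]
    {B : Matrix l n 𝕂} {Q : Matrix n n 𝕂} {Q' : Matrix l l 𝕂} (h : B * Q = Q' * B) :
    B * NormedSpace.exp Q = NormedSpace.exp Q' * B := by
  have hpow : ∀ k : ℕ, B * Q ^ k = Q' ^ k * B := by
    intro k
    induction k with
    | zero => simp
    | succ k ih => rw [pow_succ, pow_succ, ← Matrix.mul_assoc, ih, Matrix.mul_assoc, h,
        Matrix.mul_assoc]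
  have hleft := (NormedSpace.exp_series_hasSum_exp' (𝕂 := 𝕂) Q).map
    (mulLeftLinearMap n 𝕂 B) (continuous_const.matrix_mul continuous_id)
  have hright := (NormedSpace.exp_series_hasSum_exp' (𝕂 := 𝕂) Q').map
    (mulRightLinearMap l 𝕂 B) (continuous_id.matrix_mul continuous_const)
  refine hleft.unique (hright.congr_fun fun k => ?_)
  simp only [Function.comp_apply, mulLeftLinearMap_apply, mulRightLinearMap_apply,
    Matrix.mul_smul, Matrix.smul_mul, hpow]

end

section BlockWeights

variable {ι S R : Type*} {A : ι → Finset S} {α : ι → S → R}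

theorem weight_eq_zero_of_mem_of_ne [Zero R] (hpart : ∀ s, ∃! i, s ∈ A i)
    (hα0 : ∀ i, ∀ s, s ∉ A i → α i s = 0) {i j : ι} {s : S} (hs : s ∈ A i) (hji : j ≠ i) :
    α j s = 0 :=
  hα0 j s fun hjs => hji ((hpart s).unique hjs hs)

theorem vecMul_of_weights_apply_of_mem [Fintype ι] [NonUnitalNonAssocSemiring R]
    (hpart : ∀ s, ∃! i, s ∈ A i) (hα0 : ∀ i, ∀ s, s ∉ A i → α i s = 0) (v : ι → R)
    {i : ι} {s : S} (hs : s ∈ A i) :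
    (v ᵥ* of α) s = v i * α i s :=
  Finset.sum_eq_single i
    (fun _ _ hji => mul_eq_zero_of_right _ (weight_eq_zero_of_mem_of_ne hpart hα0 hs hji))
    fun hi => (hi (mem_univ i)).elim

theorem vecMul_of_weights_eq_of_respects [Fintype ι] [CommSemiring R]
    (hpart : ∀ s, ∃! i, s ∈ A i) (hα0 : ∀ i, ∀ s, s ∉ A i → α i s = 0) {π : S → R}
    (hresp : ∀ i, ∀ s ∈ A i, π s = α i s * ∑ s' ∈ A i, π s') :
    (fun i => ∑ s ∈ A i, π s) ᵥ* of α = π := by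
  funext s
  obtain ⟨i, hs, -⟩ := hpart s
  rw [vecMul_of_weights_apply_of_mem hpart hα0 _ hs, hresp i s hs, mul_comm]

theorem of_weights_mul_eq_mul_of_weights [Fintype ι] [Fintype S] [Field R]
    (hpart : ∀ s, ∃! i, s ∈ A i) (hα0 : ∀ i, ∀ s, s ∉ A i → α i s = 0)
    (hα : ∀ i, ∀ s ∈ A i, α i s ≠ 0) {Q : Matrix S S R} {Q' : Matrix ι ι R}
    (hQ' : ∀ i j, ∀ s ∈ A j, Q' i j = (∑ s' ∈ A i, α i s' * Q s' s) / α j s) :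
    of α * Q = Q' * of α := by
  ext i s
  obtain ⟨j, hs, -⟩ := hpart s
  rw [mul_apply_eq_vecMul Q', vecMul_of_weights_apply_of_mem hpart hα0 _ hs, hQ' i j s hs,
    div_mul_cancel₀ _ (hα j s hs), mul_apply]
  exact (sum_subset (subset_univ _) fun x _ hx => by rw [of_apply, hα0 i x hx, zero_mul]).symm

end BlockWeights

theorem stmt_16_general {S : Type*} [Fintype S] [DecidableEq S]
    {m : ℕ} (A : Fin m → Finset S)
    (hpart : ∀ s : S, ∃! i : Fin m, s ∈ A i)
    (Q : Matrix S S ℝ)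
    (α : Fin m → S → ℝ)
    (hα0 : ∀ i, ∀ s : S, s ∉ A i → α i s = 0)
    (hαpos : ∀ i, ∀ s ∈ A i, 0 < α i s)
    (hα1 : ∀ i, ∑ s ∈ A i, α i s = 1)
    (Qt : Matrix (Fin m) (Fin m) ℝ)
    (hQt : ∀ i j : Fin m, ∀ s ∈ A j,
      Qt i j = (∑ s' ∈ A i, α i s' * Q s' s) / α j s)
    (π : S → ℝ)
    (hresp : ∀ i : Fin m, ∀ s ∈ A i, π s = α i s * ∑ s' ∈ A i, π s') :
    ∀ t : ℝ, 0 ≤ t →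
      (∀ i : Fin m,
        Matrix.vecMul (fun i' => ∑ s ∈ A i', π s) (NormedSpace.exp (t • Qt)) i
          = ∑ s ∈ A i, Matrix.vecMul π (NormedSpace.exp (t • Q)) s) ∧
      (∀ i : Fin m, ∀ s ∈ A i,
        Matrix.vecMul π (NormedSpace.exp (t • Q)) s
          = Matrix.vecMul (fun i' => ∑ s' ∈ A i', π s') (NormedSpace.exp (t • Qt)) i * α i s) := by
  intro t _
  have hBQ := of_weights_mul_eq_mul_of_weights hpart hα0 (fun i s hs => (hαpos i s hs).ne') hQt
  have hexp : of α * NormedSpace.exp (t • Q) = NormedSpace.exp (t • Qt) * of α :=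
    mul_exp_eq_exp_mul_of_mul_eq (by rw [Matrix.mul_smul, hBQ, Matrix.smul_mul])
  have hlift : π ᵥ* NormedSpace.exp (t • Q)
      = ((fun i => ∑ s ∈ A i, π s) ᵥ* NormedSpace.exp (t • Qt)) ᵥ* of α := by
    conv_lhs => rw [← vecMul_of_weights_eq_of_respects hpart hα0 hresp]
    rw [vecMul_vecMul, hexp, vecMul_vecMul]
  have hblock : ∀ i, ∀ s ∈ A i, (π ᵥ* NormedSpace.exp (t • Q)) s
      = ((fun i => ∑ s ∈ A i, π s) ᵥ* NormedSpace.exp (t • Qt)) i * α i s := fun i s hs => by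
    rw [hlift, vecMul_of_weights_apply_of_mem hpart hα0 _ hs]
  refine ⟨fun i => ?_, hblock⟩
  rw [sum_congr rfl (hblock i), ← mul_sum, hα1, mul_one]

theorem stmt_16 {S : Type*} [Fintype S] [DecidableEq S] [Nonempty S]
    {m : ℕ} (A : Fin m → Finset S)
    (hpart : ∀ s : S, ∃! i : Fin m, s ∈ A i)
    (hne : ∀ i, (A i).Nonempty)
    (Q : Matrix S S ℝ)
    (hQ0 : ∀ s s' : S, s ≠ s' → 0 ≤ Q s s')
    (hQrow : ∀ s : S, ∑ s' : S, Q s s' = 0)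
    (α : Fin m → S → ℝ)
    (hα0 : ∀ i, ∀ s : S, s ∉ A i → α i s = 0)
    (hαpos : ∀ i, ∀ s ∈ A i, 0 < α i s)
    (hα1 : ∀ i, ∑ s ∈ A i, α i s = 1)
    (Qt : Matrix (Fin m) (Fin m) ℝ)
    (hQt : ∀ i j : Fin m, ∀ s ∈ A j,
      Qt i j = (∑ s' ∈ A i, α i s' * Q s' s) / α j s)
    (π : S → ℝ) (hπ0 : ∀ s : S, 0 ≤ π s) (hπ1 : ∑ s : S, π s = 1)
    (hresp : ∀ i : Fin m, ∀ s ∈ A i, π s = α i s * ∑ s' ∈ A i, π s') :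
    ∀ t : ℝ, 0 ≤ t →
      (∀ i : Fin m,
        Matrix.vecMul (fun i' => ∑ s ∈ A i', π s) (NormedSpace.exp (t • Qt)) i
          = ∑ s ∈ A i, Matrix.vecMul π (NormedSpace.exp (t • Q)) s) ∧
      (∀ i : Fin m, ∀ s ∈ A i,
        Matrix.vecMul π (NormedSpace.exp (t • Q)) s
          = Matrix.vecMul (fun i' => ∑ s' ∈ A i', π s') (NormedSpace.exp (t • Qt)) i * α i s) :=
  stmt_16_general A hpart Q α hα0 hαpos hα1 Qt hQt π hresp
end

section
/- (Composition of uniform aggregations) Let {A_1,…,A_M} and {B_1,…,B_N} be two partitions of S such that the first refines the second (each A_i is contained in some B_j). Let each A_i carry the uniform measure α_i(s) = 1/|A_i| and each B_j the uniform measure β_j(s) = 1/|B_j|, and assume both partitions satisfy condition (Cond2) for Q, with aggregated generator matrices Q₁ (on the A-classes) and Q₂ (on the B-classes). Define probability measures α'_j on the A-classes by α'_j(A_i) = |A_i|/|B_j| if A_i ⊆ B_j and 0 otherwise. Then for every j, j' and every A_{i'} ⊆ B_{j'}, (∑_{i : A_i ⊆ B_j} α'_j(A_i) Q₁(A_i,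 A_{i'})) / α'_{j'}(A_{i'}) = Q₂(B_j, B_{j'}); in particular this quantity does not depend on the choice of A_{i'} ⊆ B_{j'}, so the measures {α'_j} satisfy condition (Cond2) for Q₁ and the B-aggregated chain is an aggregation of the A-aggregated chain. -/
/-!
Each class `B j` is the disjoint union of the classes `A i` it contains, so the flux of `Q`
out of `B j` into a state `s ∈ A i' ⊆ B j'` splits into the fluxes out of these `A i`.
With uniform weights, `|A i| / |B j| · Q₁(A i, A i')` is `|A i'| / |B j|` times the flux out
of `A i`, so the weighted sum is `|A i'| / |B j|` times the flux out of `B j`; dividing by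
`|A i'| / |B j'|` gives the uniform aggregated rate `Q₂(B j, B j')`.
-/

open Finset

section Refinement

variable {S ι κ : Type*} [Fintype ι] [DecidableEq S] {A : ι → Finset S} {B : κ → Finset S}

theorem biUnion_filter_subset_eq_of_refines (hcover : ∀ s, ∃ i, s ∈ A i)
    (huniqB : ∀ {s k k'}, s ∈ B k → s ∈ B k' → k = k') (hrefine : ∀ i, ∃ k, A i ⊆ B k) (j : κ) :
    (univ.filter fun i => A i ⊆ B j).biUnion A = B j := by
  ext t
  simp only [mem_biUnion, mem_filter, mem_univ, true_and]
  refine ⟨fun ⟨i, hiB, hti⟩ => hiB hti, fun ht => ?_⟩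
  obtain ⟨i, hti⟩ := hcover t
  obtain ⟨k, hk⟩ := hrefine i
  exact ⟨i, huniqB (hk hti) ht ▸ hk, hti⟩

theorem sum_eq_sum_filter_subset_sum {R : Type*} [AddCommMonoid R] (hcover : ∀ s, ∃ i, s ∈ A i)
    (huniqA : ∀ {s i i'}, s ∈ A i → s ∈ A i' → i = i')
    (huniqB : ∀ {s k k'}, s ∈ B k → s ∈ B k' → k = k') (hrefine : ∀ i, ∃ k, A i ⊆ B k)
    (j : κ) (f : S → R) :
    ∑ s ∈ B j, f s = ∑ i ∈ univ.filter (fun i => A i ⊆ B j), ∑ s ∈ A i, f s := by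
  conv_lhs => rw [← biUnion_filter_subset_eq_of_refines hcover huniqB hrefine j]
  rw [sum_biUnion]
  intro i₁ _ i₂ _ hne
  exact disjoint_left.mpr fun t ht₁ ht₂ => hne (huniqA ht₁ ht₂)

end Refinement

theorem stmt_19_general {S : Type*} [DecidableEq S]
    {M N : ℕ} (A : Fin M → Finset S) (B : Fin N → Finset S)
    (hpartA : ∀ s : S, ∃! i : Fin M, s ∈ A i) (hneA : ∀ i, (A i).Nonempty)
    (hpartB : ∀ s : S, ∃! j : Fin N, s ∈ B j)
    (hrefine : ∀ i : Fin M, ∃ j : Fin N, A i ⊆ B j)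
    (Q : Matrix S S ℝ)
    (Q1 : Matrix (Fin M) (Fin M) ℝ)
    (hQ1 : ∀ i i' : Fin M, ∀ s ∈ A i',
      Q1 i i' = (((A i').card : ℝ) / ((A i).card : ℝ)) * ∑ s' ∈ A i, Q s' s)
    (Q2 : Matrix (Fin N) (Fin N) ℝ)
    (hQ2 : ∀ j j' : Fin N, ∀ s ∈ B j',
      Q2 j j' = (((B j').card : ℝ) / ((B j).card : ℝ)) * ∑ s' ∈ B j, Q s' s) :
    ∀ j j' : Fin N, ∀ i' : Fin M, A i' ⊆ B j' →
      (∑ i : Fin M, (if A i ⊆ B j then ((A i).card : ℝ) / ((B j).card : ℝ) else 0) * Q1 i i')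
        / (((A i').card : ℝ) / ((B j').card : ℝ)) = Q2 j j' := by
  intro j j' i' hsub
  obtain ⟨s, hs⟩ := hneA i'
  have hcardA : ∀ i, ((A i).card : ℝ) ≠ 0 := fun i => by exact_mod_cast (hneA i).card_ne_zero
  have hcardB : ((B j').card : ℝ) ≠ 0 := by exact_mod_cast ((hneA i').mono hsub).card_ne_zero
  have hflux : ∑ i : Fin M, (if A i ⊆ B j then ((A i).card : ℝ) / ((B j).card : ℝ) else 0) * Q1 i i'
      = ((A i').card : ℝ) / ((B j).card : ℝ) * ∑ s' ∈ B j, Q s' s := by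
    rw [sum_eq_sum_filter_subset_sum (fun t => (hpartA t).exists) (hpartA _).unique
      (hpartB _).unique hrefine j, mul_sum, sum_filter]
    refine sum_congr rfl fun i _ => ?_
    split_ifs
    · rw [hQ1 i i' s hs]
      field_simp [hcardA i]
    · exact zero_mul _
  rw [hflux, hQ2 j j' s (hsub hs)]
  field_simp [hcardA i', hcardB]

theorem stmt_19 {S : Type*} [Fintype S] [DecidableEq S] [Nonempty S]
    {M N : ℕ} (A : Fin M → Finset S) (B : Fin N → Finset S)
    (hpartA : ∀ s : S, ∃! i : Fin M, s ∈ A i) (hneA : ∀ i, (A i).Nonempty)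
    (hpartB : ∀ s : S, ∃! j : Fin N, s ∈ B j) (hneB : ∀ j, (B j).Nonempty)
    (hrefine : ∀ i : Fin M, ∃ j : Fin N, A i ⊆ B j)
    (Q : Matrix S S ℝ)
    (hQ0 : ∀ s s' : S, s ≠ s' → 0 ≤ Q s s')
    (hQrow : ∀ s : S, ∑ s' : S, Q s s' = 0)
    (Q1 : Matrix (Fin M) (Fin M) ℝ)
    (hQ1 : ∀ i i' : Fin M, ∀ s ∈ A i',
      Q1 i i' = (((A i').card : ℝ) / ((A i).card : ℝ)) * ∑ s' ∈ A i, Q s' s)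
    (Q2 : Matrix (Fin N) (Fin N) ℝ)
    (hQ2 : ∀ j j' : Fin N, ∀ s ∈ B j',
      Q2 j j' = (((B j').card : ℝ) / ((B j).card : ℝ)) * ∑ s' ∈ B j, Q s' s) :
    ∀ j j' : Fin N, ∀ i' : Fin M, A i' ⊆ B j' →
      (∑ i : Fin M, (if A i ⊆ B j then ((A i).card : ℝ) / ((B j).card : ℝ) else 0) * Q1 i i')
        / (((A i').card : ℝ) / ((B j').card : ℝ)) = Q2 j j' :=
  stmt_19_general A B hpartA hneA hpartB hrefine Q Q1 hQ1 Q2 hQ2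
end
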